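/- arXiv:math/0504490 — 2 statements merged into one kernel-verified Lean document; each statement's English description precedes it below -/
import Mathlib

section
/- Let T be an aperiodic homeomorphism of a Cantor set Ω. Then there exists a sequence (Pₙ) of homeomorphisms of Ω such that: each Pₙ has finite order (there is an integer N ≥ 1 with Pₙ^N = identity); each Pₙ belongs to the topological full group [[T]], i.e. there is a continuous function mₙ : Ω → ℤ with Pₙ x = T^{mₙ(x)} x for all x; and Pₙ converges to T in the uniform topology in the pointwise-eventual sense: for every x ∈ Ω there exists N ∈ ℕ such that Pₙ x = T x for all n ≥ N. -/
/-!
A clopen set `S` that every orbit meets within `n` steps cuts each orbit into finite columns;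
the map that follows `T` up each column and sends its top back to its bottom is
a periodic element of `[[T]]` that differs from `T` only on `T⁻¹ S`. It therefore suffices to
find pairwise disjoint such sections `S₀, S₁, …`, since every point lies in at most one of them.
Aperiodicity, compactness and total disconnectedness give marker sets, whose visits along any
orbit are frequent but far apart. The `n`-th section is obtained by pushing each point of a
marker forward to its first visit outside `S₀ ∪ ⋯ ∪ Sₙ₋₁`; since each new section is sparse,
the complement of the union remains syndetic and the construction goes on.
-/

open Set Function

theorem IsLocallyConstant.ite {X Y : Type*} [TopologicalSpace X] {p : X → Prop} [DecidablePred p]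
    (hp : IsClopen {x | p x}) {f g : X → Y} (hf : IsLocallyConstant f)
    (hg : IsLocallyConstant g) : IsLocallyConstant fun x => if p x then f x else g x := by
  refine (IsLocallyConstant.iff_eventually_eq _).2 fun x => ?_
  by_cases hx : p x
  · filter_upwards [hp.isOpen.mem_nhds hx, hf.eventually_eq x] with y hy hfy
    simp only [show p y from hy, hx, hfy, if_true]
  · filter_upwards [hp.compl.isOpen.mem_nhds hx, hg.eventually_eq x] with y hy hgy
    simp only [show ¬p y from hy, hx, hgy, if_false]

namespace Homeomorph

variable {X : Type*} [TopologicalSpace X]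

theorem coe_pow (T : X ≃ₜ X) (n : ℕ) : ⇑(T ^ n) = (⇑T)^[n] := by
  induction n with
  | zero => rfl
  | succ n ih => rw [pow_succ, iterate_succ, ← ih]; rfl

theorem toEquiv_zpow (T : X ≃ₜ X) (k : ℤ) : (T ^ k).toEquiv = T.toEquiv ^ k :=
  map_zpow (⟨⟨toEquiv, rfl⟩, fun _ _ => rfl⟩ : (X ≃ₜ X) →* Equiv.Perm X) T k

@[simp]
theorem zpow_apply_zpow_apply (T : X ≃ₜ X) (i j : ℤ) (x : X) :
    (T ^ i) ((T ^ j) x) = (T ^ (i + j)) x := by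
  rw [zpow_add, mul_apply]

theorem apply_zpow_apply (T : X ≃ₜ X) (i : ℤ) (x : X) : T ((T ^ i) x) = (T ^ (i + 1)) x := by
  rw [add_comm, zpow_one_add, mul_apply]

theorem zpow_apply_apply (T : X ≃ₜ X) (i : ℤ) (x : X) : (T ^ i) (T x) = (T ^ (i + 1)) x := by
  rw [zpow_add_one, mul_apply]

def ofIterateEqId (f : X → X) (hf : Continuous f) (N : ℕ) (h : ∀ x, f^[N + 1] x = x) :
    X ≃ₜ X where
  toFun := f
  invFun := f^[N]
  left_inv x := by rw [← iterate_succ_apply, h]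
  right_inv x := by rw [← iterate_succ_apply' f N, h]
  continuous_toFun := hf
  continuous_invFun := hf.iterate N

theorem continuous_zpow_apply (T : X ≃ₜ X) {m : X → ℤ} (hm : IsLocallyConstant m) :
    Continuous fun x => (T ^ m x) x :=
  continuous_iff_continuousAt.2 fun x => (T ^ m x).continuous.continuousAt.congr <|
    (hm.eventually_eq x).mono fun y hy => by simp only [hy]

section ReturnTimes

variable (T : X ≃ₜ X)

def ReturnsWithin (A : Set X) (n : ℕ) : Prop :=
  ∀ x, ∃ t : ℕ, t < n ∧ (T ^ (t : ℤ)) x ∈ A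

/-- `0` if the forward orbit of `x` never enters `A`. -/
noncomputable def hittingTime (A : Set X) (x : X) : ℕ :=
  sInf {t : ℕ | (T ^ (t : ℤ)) x ∈ A}

variable {T} {A : Set X} {n : ℕ} {x : X}

theorem zpow_hittingTime_mem {t : ℕ} (ht : (T ^ (t : ℤ)) x ∈ A) :
    (T ^ (T.hittingTime A x : ℤ)) x ∈ A :=
  Nat.sInf_mem (s := {t : ℕ | (T ^ (t : ℤ)) x ∈ A}) ⟨t, ht⟩

theorem hittingTime_le {t : ℕ} (ht : (T ^ (t : ℤ)) x ∈ A) : T.hittingTime A x ≤ t :=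
  Nat.sInf_le ht

theorem zpow_notMem_of_lt_hittingTime {t : ℕ} (ht : t < T.hittingTime A x) :
    (T ^ (t : ℤ)) x ∉ A :=
  Nat.notMem_of_lt_sInf ht

theorem hittingTime_eq {k : ℕ} (hk : (T ^ (k : ℤ)) x ∈ A)
    (hlt : ∀ t < k, (T ^ (t : ℤ)) x ∉ A) : T.hittingTime A x = k :=
  (hittingTime_le hk).antisymm <| not_lt.1 fun h => hlt _ h (zpow_hittingTime_mem hk)

namespace ReturnsWithin

theorem zpow_hittingTime_mem (h : T.ReturnsWithin A n) (x : X) :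
    (T ^ (T.hittingTime A x : ℤ)) x ∈ A :=
  let ⟨_, _, ht⟩ := h x; Homeomorph.zpow_hittingTime_mem ht

theorem hittingTime_lt (h : T.ReturnsWithin A n) (x : X) : T.hittingTime A x < n :=
  let ⟨_, htn, ht⟩ := h x; (hittingTime_le ht).trans_lt htn

theorem isLocallyConstant_hittingTime (h : T.ReturnsWithin A n) (hA : IsClopen A) :
    IsLocallyConstant (T.hittingTime A) := by
  refine IsLocallyConstant.iff_isOpen_fiber.2 fun k => ?_
  have hfiber : T.hittingTime A ⁻¹' {k} =
      (T ^ (k : ℤ)) ⁻¹' A ∩ ⋂ t ∈ Finset.range k, (T ^ (t : ℤ)) ⁻¹' Aᶜ := by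
    ext x
    simp only [mem_preimage, mem_singleton_iff, mem_inter_iff, mem_iInter, Finset.mem_range,
      mem_compl_iff]
    refine ⟨?_, fun hx => hittingTime_eq hx.1 hx.2⟩
    rintro rfl
    exact ⟨h.zpow_hittingTime_mem x, fun t ht => zpow_notMem_of_lt_hittingTime ht⟩
  rw [hfiber]
  exact (hA.isOpen.preimage (T ^ (k : ℤ)).continuous).inter <|
    isOpen_biInter_finset fun t _ => hA.compl.isOpen.preimage (T ^ (t : ℤ)).continuous

theorem inv (h : T.ReturnsWithin A n) : T⁻¹.ReturnsWithin A n := by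
  intro x
  obtain ⟨t, htn, ht⟩ := h ((T ^ (-(n : ℤ) + 1)) x)
  refine ⟨n - 1 - t, by omega, ?_⟩
  rw [zpow_apply_zpow_apply] at ht
  rw [inv_zpow']
  convert ht using 3
  omega

end ReturnsWithin

end ReturnTimes

section Markers

variable (T : X ≃ₜ X)

def OrbitSeparated (M : Set X) (h : ℕ) : Prop :=
  ∀ x ∈ M, ∀ k : ℤ, 0 < k → k < h → (T ^ k) x ∉ M

def orbitThickening (M : Set X) (h : ℕ) : Set X :=
  ⋃ k ∈ Finset.Icc (-(h : ℤ)) h, (T ^ k) ⁻¹' M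

variable {T} {M U : Set X} {h : ℕ} {x : X}

theorem OrbitSeparated.zpow_apply_notMem (hM : T.OrbitSeparated M h) (hx : x ∈ M) {k : ℤ}
    (hk₀ : k ≠ 0) (hk : |k| < h) : (T ^ k) x ∉ M := by
  rcases abs_lt.1 hk with ⟨hk₁, hk₂⟩
  rcases hk₀.lt_or_gt with hneg | hpos
  · intro hmem
    refine hM _ hmem (-k) (by omega) (by omega) ?_
    simpa using hx
  · exact hM x hx k hpos hk₂

theorem mem_orbitThickening : x ∈ T.orbitThickening M h ↔ ∃ k : ℤ, |k| ≤ h ∧ (T ^ k) x ∈ M := by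
  simp [orbitThickening, abs_le]

theorem isClopen_orbitThickening (hM : IsClopen M) : IsClopen (T.orbitThickening M h) :=
  isClopen_biUnion_finset fun k _ => hM.preimage (T ^ k).continuous

theorem orbitThickening_mono (hMU : M ⊆ U) : T.orbitThickening M h ⊆ T.orbitThickening U h :=
  biUnion_mono subset_rfl fun _ _ => preimage_mono hMU

theorem OrbitSeparated.union_diff_orbitThickening (hM : T.OrbitSeparated M h)
    (hU : T.OrbitSeparated U h) : T.OrbitSeparated (M ∪ (U \ T.orbitThickening M h)) h := by
  intro x hx k hk₀ hkh hkx
  have hk : |k| ≤ h := abs_le.2 ⟨by omega, hkh.le⟩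
  rcases hx with hx | ⟨hxU, hxM⟩ <;> rcases hkx with hkx | ⟨hkxU, hkxM⟩
  · exact hM x hx k hk₀ hkh hkx
  · exact hkxM (mem_orbitThickening.2 ⟨-k, by rwa [abs_neg], by simpa using hx⟩)
  · exact hxM (mem_orbitThickening.2 ⟨k, hk, hkx⟩)
  · exact hU x hxU k hk₀ hkh hkxU

theorem exists_orbitSeparated_of_finset {ι : Type*} (U : ι → Set X)
    (hU : ∀ i, IsClopen (U i) ∧ T.OrbitSeparated (U i) h) (s : Finset ι) :
    ∃ M, IsClopen M ∧ T.OrbitSeparated M h ∧ ∀ i ∈ s, U i ⊆ T.orbitThickening M h := by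
  classical
  induction s using Finset.induction_on with
  | empty => exact ⟨∅, isClopen_empty, fun _ hx => hx.elim, by simp⟩
  | insert i s _ ih =>
    obtain ⟨M, hM, hMsep, hMcov⟩ := ih
    have hsub : T.orbitThickening M h ⊆ T.orbitThickening (M ∪ (U i \ T.orbitThickening M h)) h :=
      orbitThickening_mono subset_union_left
    refine ⟨M ∪ (U i \ T.orbitThickening M h),
      hM.union ((hU i).1.diff (isClopen_orbitThickening hM)),
      hMsep.union_diff_orbitThickening (hU i).2, fun j hj => ?_⟩
    rcases Finset.mem_insert.1 hj with rfl | hj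
    · intro x hx
      by_cases hxM : x ∈ T.orbitThickening M h
      · exact hsub hxM
      · exact mem_orbitThickening.2 ⟨0, by simp, Or.inr ⟨by simpa using hx, hxM⟩⟩
    · exact (hMcov j hj).trans hsub

theorem exists_isClopen_orbitSeparated_mem [TotallySeparatedSpace X]
    (hx : ∀ k : ℤ, 0 < k → k < h → (T ^ k) x ≠ x) :
    ∃ U, IsClopen U ∧ x ∈ U ∧ T.OrbitSeparated U h := by
  have hsep : ∀ k : ℤ, ∃ V, IsClopen V ∧ x ∈ V ∧ (0 < k → k < h → ∀ y ∈ V, (T ^ k) y ∉ V) := by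
    intro k
    by_cases hk : 0 < k ∧ k < h
    · obtain ⟨W, hW, hxW, hkxW⟩ := exists_isClopen_of_totally_separated (hx k hk.1 hk.2).symm
      exact ⟨W ∩ (T ^ k) ⁻¹' Wᶜ, hW.inter (hW.compl.preimage (T ^ k).continuous),
        ⟨hxW, hkxW⟩, fun _ _ y hy hky => hy.2 hky.1⟩
    · exact ⟨univ, isClopen_univ, mem_univ x, fun h₀ h₁ => (hk ⟨h₀, h₁⟩).elim⟩
  choose V hV hxV hVsep using hsep
  refine ⟨⋂ k ∈ Finset.Ioo (0 : ℤ) h, V k, isClopen_biInter_finset fun k _ => hV k,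
    mem_iInter₂.2 fun k _ => hxV k, fun y hy k hk₀ hkh hky => ?_⟩
  have hk : k ∈ Finset.Ioo (0 : ℤ) h := Finset.mem_Ioo.2 ⟨hk₀, hkh⟩
  exact hVsep k hk₀ hkh y (mem_iInter₂.1 hy k hk) (mem_iInter₂.1 hky k hk)

theorem exists_isClopen_orbitSeparated_returnsWithin [CompactSpace X] [TotallySeparatedSpace X]
    (h : ℕ) (hT : ∀ x, ∀ k : ℤ, 0 < k → k < h → (T ^ k) x ≠ x) :
    ∃ M, IsClopen M ∧ T.OrbitSeparated M h ∧ T.ReturnsWithin M (2 * h + 1) := by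
  choose U hU hxU hUsep using fun x => exists_isClopen_orbitSeparated_mem (hT x)
  obtain ⟨s, hs⟩ := isCompact_univ.elim_finite_subcover U (fun x => (hU x).isOpen)
    fun x _ => mem_iUnion.2 ⟨x, hxU x⟩
  obtain ⟨M, hM, hMsep, hMcov⟩ :=
    exists_orbitSeparated_of_finset U (fun x => ⟨hU x, hUsep x⟩) s
  refine ⟨M, hM, hMsep, fun x => ?_⟩
  obtain ⟨y, hy, hxy⟩ := mem_iUnion₂.1 (hs (mem_univ ((T ^ (h : ℤ)) x)))
  obtain ⟨k, hk, hkM⟩ := mem_orbitThickening.1 (hMcov y hy hxy)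
  rcases abs_le.1 hk with ⟨hk₁, hk₂⟩
  refine ⟨(k + h).toNat, by omega, ?_⟩
  rw [zpow_apply_zpow_apply] at hkM
  convert hkM using 3
  omega

end Markers

section DisjointSections

variable {T : X ≃ₜ X} {B M F S : Set X} {w : ℕ}

theorem ReturnsWithin.union_compl (hF : T.ReturnsWithin Fᶜ w) (hS : T.OrbitSeparated S (2 * w)) :
    T.ReturnsWithin (F ∪ S)ᶜ (2 * w) := by
  intro x
  obtain ⟨t₁, ht₁w, ht₁⟩ := hF x
  obtain ⟨t₂, ht₂w, ht₂⟩ := hF ((T ^ (w : ℤ)) x)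
  rw [zpow_apply_zpow_apply] at ht₂
  by_cases hS₁ : (T ^ (t₁ : ℤ)) x ∈ S
  · refine ⟨t₂ + w, by omega, ?_⟩
    have hS₂ := hS _ hS₁ ((t₂ + w : ℕ) - t₁) (by omega) (by omega)
    rw [zpow_apply_zpow_apply, sub_add_cancel] at hS₂
    exact fun h => h.elim ht₂ hS₂
  · exact ⟨t₁, by omega, fun h => h.elim ht₁ hS₁⟩

variable (T) in
noncomputable def advanceToHit (B M : Set X) : Set X :=
  (fun y => (T ^ (T.hittingTime B y : ℤ)) y) '' M

theorem ReturnsWithin.isClopen_advanceToHit (hB : T.ReturnsWithin B w)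
    (hBc : IsClopen B) (hM : IsClopen M) : IsClopen (T.advanceToHit B M) := by
  have hunion : T.advanceToHit B M =
      ⋃ j ∈ Finset.range w, (T ^ (-(j : ℤ))) ⁻¹' (M ∩ {y | T.hittingTime B y = j}) := by
    ext x
    simp only [advanceToHit, mem_image, mem_iUnion, mem_preimage, mem_inter_iff, mem_ofPred_eq,
      Finset.mem_range, exists_prop]
    constructor
    · rintro ⟨y, hyM, rfl⟩
      exact ⟨_, hB.hittingTime_lt y, by simpa using hyM, by simp⟩
    · rintro ⟨j, -, hyM, hj⟩
      exact ⟨_, hyM, by rw [hj, zpow_apply_zpow_apply]; simp⟩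
  rw [hunion]
  exact isClopen_biUnion_finset fun j _ =>
    (hM.inter ((hB.isLocallyConstant_hittingTime hBc).isClopen_fiber j)).preimage
      (T ^ _).continuous

theorem ReturnsWithin.orbitSeparated_advanceToHit (hB : T.ReturnsWithin B w)
    (hM : T.OrbitSeparated M (3 * w)) : T.OrbitSeparated (T.advanceToHit B M) (2 * w) := by
  rintro _ ⟨y, hyM, rfl⟩ k hk₀ hkw ⟨y', hy'M, hy'⟩
  have hlt := hB.hittingTime_lt y
  have hlt' := hB.hittingTime_lt y'
  have hyy' : (T ^ (k + T.hittingTime B y - T.hittingTime B y')) y = y' := by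
    simp only [zpow_apply_zpow_apply] at hy'
    rw [← (T ^ (T.hittingTime B y' : ℤ)).injective.eq_iff, zpow_apply_zpow_apply, hy',
      add_sub_cancel]
  by_cases hd : k + T.hittingTime B y - T.hittingTime B y' = 0
  · rw [hd, zpow_zero, one_apply] at hyy'
    subst hyy'
    omega
  · exact hM.zpow_apply_notMem hyM hd (abs_lt.2 ⟨by omega, by omega⟩) (by rwa [hyy'])

/-- Inside a marker set with gaps `3 * w`, moving each marker forward to its first visit outside
`F` (which comes within `w` steps) yields a section with gaps `2 * w` that avoids `F`. -/
theorem exists_isClopen_disjoint_returnsWithin [CompactSpace X] [TotallySeparatedSpace X]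
    (hT : ∀ x, ∀ k : ℤ, 0 < k → (T ^ k) x ≠ x) (hF : IsClopen F) (hw : T.ReturnsWithin Fᶜ w) :
    ∃ S, IsClopen S ∧ Disjoint S F ∧ T.ReturnsWithin S (7 * w) ∧
      T.ReturnsWithin (F ∪ S)ᶜ (2 * w) := by
  obtain ⟨M, hM, hMsep, hMret⟩ :=
    exists_isClopen_orbitSeparated_returnsWithin (T := T) (3 * w) fun x k hk _ => hT x k hk
  refine ⟨T.advanceToHit Fᶜ M, hw.isClopen_advanceToHit hF.compl hM, ?_, fun x => ?_,
    hw.union_compl (hw.orbitSeparated_advanceToHit hMsep)⟩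
  · rw [disjoint_left]
    rintro _ ⟨y, -, rfl⟩
    exact hw.zpow_hittingTime_mem y
  · obtain ⟨t, ht, htM⟩ := hMret x
    have := hw.hittingTime_lt ((T ^ (t : ℤ)) x)
    refine ⟨T.hittingTime Fᶜ ((T ^ (t : ℤ)) x) + t, by omega, _, htM, ?_⟩
    dsimp only
    rw [zpow_apply_zpow_apply]
    push_cast
    rfl

end DisjointSections

section Towers

variable (T : X ≃ₜ X) (S : Set X)

open Classical in
/-- `towerMap` is `T` except at the top of each column of the tower over `S`, where it jumps
back down to the base; `T⁻¹.hittingTime S x` is the height of `x` in its column. -/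
noncomputable def towerShift (x : X) : ℤ :=
  if T x ∈ S then -(T⁻¹.hittingTime S x : ℤ) else 1

noncomputable def towerMap (x : X) : X :=
  (T ^ T.towerShift S x) x

variable {T S} {n : ℕ} {x y : X}

theorem towerMap_of_notMem (hx : T x ∉ S) : T.towerMap S x = T x := by
  simp [towerMap, towerShift, hx]

theorem towerMap_of_mem (hx : T x ∈ S) :
    T.towerMap S x = (T ^ (-(T⁻¹.hittingTime S x : ℤ))) x := by
  simp [towerMap, towerShift, hx]

theorem hittingTime_inv_zpow_apply {j : ℕ} (hy : y ∈ S)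
    (hcol : ∀ i : ℕ, 0 < i → i ≤ j → (T ^ (i : ℤ)) y ∉ S) :
    T⁻¹.hittingTime S ((T ^ (j : ℤ)) y) = j := by
  refine hittingTime_eq (by simpa [inv_zpow'] using hy) fun t ht => ?_
  rw [inv_zpow', zpow_apply_zpow_apply, neg_add_eq_sub, ← Nat.cast_sub ht.le]
  exact hcol _ (by omega) (by omega)

theorem iterate_towerMap {j : ℕ}
    (hcol : ∀ i : ℕ, 0 < i → i ≤ j → (T ^ (i : ℤ)) y ∉ S) :
    (T.towerMap S)^[j] y = (T ^ (j : ℤ)) y := by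
  induction j with
  | zero => simp
  | succ j ih =>
    have hj : T ((T ^ (j : ℤ)) y) ∉ S := by
      rw [apply_zpow_apply]
      exact_mod_cast hcol (j + 1) (by omega) le_rfl
    rw [iterate_succ_apply', ih fun i hi₀ hi => hcol i hi₀ (by omega), towerMap_of_notMem hj,
      apply_zpow_apply]
    push_cast
    rfl

theorem isPeriodicPt_towerMap_of_mem {j : ℕ} (hy : y ∈ S)
    (hcol : ∀ i : ℕ, 0 < i → i ≤ j → (T ^ (i : ℤ)) y ∉ S) (hret : (T ^ ((j + 1 : ℕ) : ℤ)) y ∈ S) :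
    IsPeriodicPt (T.towerMap S) (j + 1) y := by
  have htop : T ((T ^ (j : ℤ)) y) ∈ S := by
    rw [apply_zpow_apply]
    exact_mod_cast hret
  rw [IsPeriodicPt, IsFixedPt, iterate_succ_apply', iterate_towerMap hcol,
    towerMap_of_mem htop, hittingTime_inv_zpow_apply hy hcol]
  simp

theorem ReturnsWithin.isPeriodicPt_towerMap (hS : T.ReturnsWithin S n) (x : X) :
    ∃ r, 0 < r ∧ r ≤ 2 * n ∧ IsPeriodicPt (T.towerMap S) r x := by
  set a := T⁻¹.hittingTime S x
  set s := T.hittingTime S (T x)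
  set y := (T ^ (-(a : ℤ))) x
  have hy : y ∈ S := by simpa [y, inv_zpow'] using hS.inv.zpow_hittingTime_mem x
  have hcol : ∀ i : ℕ, 0 < i → i ≤ a + s → (T ^ (i : ℤ)) y ∉ S := by
    intro i hi₀ hi
    rw [zpow_apply_zpow_apply]
    rcases le_or_gt i a with hia | hai
    · have := zpow_notMem_of_lt_hittingTime (T := T⁻¹) (A := S) (x := x) (t := a - i) (by omega)
      rwa [inv_zpow', Nat.cast_sub hia, neg_sub, sub_eq_add_neg] at this
    · have := zpow_notMem_of_lt_hittingTime (T := T) (A := S) (x := T x) (t := i - a - 1) (by omega)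
      rwa [zpow_apply_apply, show ((i - a - 1 : ℕ) + 1 : ℤ) = i + -a by omega] at this
  have hret : (T ^ ((a + s + 1 : ℕ) : ℤ)) y ∈ S := by
    have := hS.zpow_hittingTime_mem (T x)
    rw [zpow_apply_apply] at this
    rwa [zpow_apply_zpow_apply, show ((a + s + 1 : ℕ) : ℤ) + -a = s + 1 by omega]
  have hxy : (T.towerMap S)^[a] y = x := by
    rw [iterate_towerMap fun i hi₀ hi => hcol i hi₀ (by omega), zpow_apply_zpow_apply,
      add_neg_cancel, zpow_zero, one_apply]
  have ha := hS.inv.hittingTime_lt x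
  have hs := hS.hittingTime_lt (T x)
  exact ⟨a + s + 1, by omega, by omega,
    hxy ▸ (isPeriodicPt_towerMap_of_mem hy hcol hret).apply_iterate a⟩

theorem ReturnsWithin.iterate_towerMap_factorial (hS : T.ReturnsWithin S n) (x : X) :
    (T.towerMap S)^[(2 * n).factorial] x = x :=
  let ⟨_, hr₀, hrn, hr⟩ := hS.isPeriodicPt_towerMap x
  (hr.trans_dvd (Nat.dvd_factorial hr₀ hrn)).eq

theorem ReturnsWithin.isLocallyConstant_towerShift (hS : T.ReturnsWithin S n)
    (hSc : IsClopen S) : IsLocallyConstant (T.towerShift S) := by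
  classical
  exact .ite (hSc.preimage T.continuous)
    ((hS.inv.isLocallyConstant_hittingTime hSc).comp fun k : ℕ => -(k : ℤ)) (.const 1)

theorem ReturnsWithin.exists_periodic_approx (hS : T.ReturnsWithin S n) (hSc : IsClopen S) :
    ∃ P : X ≃ₜ X, (∃ N : ℕ, 1 ≤ N ∧ ∀ x, (⇑P)^[N] x = x) ∧
      (∃ m : X → ℤ, Continuous m ∧ ∀ x, P x = (T.toEquiv ^ m x) x) ∧
      ∀ x, T x ∉ S → P x = T x := by
  have hN : ∀ x, (T.towerMap S)^[(2 * n).factorial - 1 + 1] x = x := by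
    rw [Nat.sub_add_cancel (Nat.factorial_pos _)]
    exact hS.iterate_towerMap_factorial
  have hm := hS.isLocallyConstant_towerShift hSc
  refine ⟨ofIterateEqId _ (T.continuous_zpow_apply hm) _ hN, ⟨_, by omega, hN⟩,
    ⟨T.towerShift S, hm.continuous, fun x => ?_⟩, fun x => towerMap_of_notMem⟩
  rw [← toEquiv_zpow]
  rfl

end Towers

variable {T : X ≃ₜ X}

/-- Sections are added one at a time, each avoiding the union `F n` of the previous ones; the
complement of `F n` is met by every orbit segment of length `2 ^ n`, which leaves room for the
next section. -/
theorem exists_pairwise_disjoint_returnsWithin [CompactSpace X] [TotallySeparatedSpace X]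
    (hT : ∀ x, ∀ k : ℤ, 0 < k → (T ^ k) x ≠ x) :
    ∃ S : ℕ → Set X, (∀ n, IsClopen (S n) ∧ ∃ N, T.ReturnsWithin (S n) N) ∧
      Pairwise (Disjoint on S) := by
  choose! S hSc hSF hSret hSavoid using
    fun F w (hF : IsClopen F) (hw : T.ReturnsWithin Fᶜ w) =>
      exists_isClopen_disjoint_returnsWithin hT hF hw
  let F : ℕ → Set X := fun n => Nat.rec ∅ (fun n Fn => Fn ∪ S Fn (2 ^ n)) n
  have hF : ∀ n, IsClopen (F n) ∧ T.ReturnsWithin (F n)ᶜ (2 ^ n) := by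
    intro n
    induction n with
    | zero => exact ⟨isClopen_empty, fun x => ⟨0, one_pos, notMem_empty _⟩⟩
    | succ n ih =>
      exact ⟨ih.1.union (hSc _ _ ih.1 ih.2), by rw [pow_succ']; exact hSavoid _ _ ih.1 ih.2⟩
  have hmono : Monotone F := monotone_nat_of_le_succ fun n => subset_union_left
  refine ⟨fun n => S (F n) (2 ^ n),
    fun n => ⟨hSc _ _ (hF n).1 (hF n).2, _, hSret _ _ (hF n).1 (hF n).2⟩,
    (pairwise_disjoint_on _).2 fun m n hmn => ?_⟩
  exact (hSF _ _ (hF n).1 (hF n).2).symm.mono_left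
    ((subset_union_right : S (F m) (2 ^ m) ⊆ F (m + 1)).trans (hmono hmn))

end Homeomorph

theorem stmt_15_general {Ω : Type*} [TopologicalSpace Ω] [CompactSpace Ω]
    [TopologicalSpace.MetrizableSpace Ω] [TotallyDisconnectedSpace Ω]
    (T : Ω ≃ₜ Ω)
    (hT : ∀ x : Ω, ∀ n : ℕ, 1 ≤ n → (T : Ω → Ω)^[n] x ≠ x) :
    ∃ P : ℕ → (Ω ≃ₜ Ω),
      (∀ n, ∃ N : ℕ, 1 ≤ N ∧ ∀ x : Ω, ((P n : Ω → Ω))^[N] x = x) ∧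
      (∀ n, ∃ m : Ω → ℤ, Continuous m ∧ ∀ x : Ω, (P n) x = (T.toEquiv ^ (m x)) x) ∧
      (∀ x : Ω, ∃ N : ℕ, ∀ n ≥ N, (P n) x = T x) := by
  have hT' : ∀ x, ∀ k : ℤ, 0 < k → (T ^ k) x ≠ x := fun x k hk => by
    lift k to ℕ using hk.le
    rw [zpow_natCast, Homeomorph.coe_pow]
    exact hT x k (by omega)
  obtain ⟨S, hS, hdisj⟩ := Homeomorph.exists_pairwise_disjoint_returnsWithin hT'
  choose N hN using fun n => (hS n).2
  choose P hPper hPfull hPeq using fun n => (hN n).exists_periodic_approx (hS n).1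
  refine ⟨P, hPper, hPfull, fun x => ?_⟩
  by_cases hx : ∃ k, T x ∈ S k
  · obtain ⟨k, hk⟩ := hx
    exact ⟨k + 1, fun n hn => hPeq n x fun h =>
      disjoint_left.1 (hdisj (show k ≠ n by omega)) hk h⟩
  · rw [not_exists] at hx
    exact ⟨0, fun n _ => hPeq n x (hx n)⟩

/-- **Periodic approximation in Cantor dynamics.** Let `T` be an aperiodic homeomorphism
of a Cantor set `Ω`. There is a sequence `(Pₙ)` of finite-order homeomorphisms belonging
to the topological full group `[[T]]` which converges to `T` in the uniform topology,
i.e. pointwise eventually. -/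
theorem stmt_15 {Ω : Type*} [TopologicalSpace Ω] [CompactSpace Ω]
    [TopologicalSpace.MetrizableSpace Ω] [TotallyDisconnectedSpace Ω] [PerfectSpace Ω]
    [Nonempty Ω]
    (T : Ω ≃ₜ Ω)
    (hT : ∀ x : Ω, ∀ n : ℕ, 1 ≤ n → (T : Ω → Ω)^[n] x ≠ x) :
    ∃ P : ℕ → (Ω ≃ₜ Ω),
      (∀ n, ∃ N : ℕ, 1 ≤ N ∧ ∀ x : Ω, ((P n : Ω → Ω))^[N] x = x) ∧
      (∀ n, ∃ m : Ω → ℤ, Continuous m ∧ ∀ x : Ω, (P n) x = (T.toEquiv ^ (m x)) x) ∧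
      (∀ x : Ω, ∃ N : ℕ, ∀ n ≥ N, (P n) x = T x) :=
  stmt_15_general T hT
end

section
/- Let T be any homeomorphism of a Cantor set Ω. Then for every ε > 0 and any finite list of Borel probability measures μ₁, …, μ_k on Ω there exists a homeomorphism P of Ω of finite order (there is an integer N ≥ 1 with P^N = identity) such that μᵢ(E(P, T)) < ε for every i = 1, …, k. That is, the homeomorphisms of finite order are dense in Homeo(Ω) with respect to the uniform topology τ. -/
/-!
A clopen castle is a finite family of towers `B, T B, …, T^(h-1) B` with clopen bases whose levels
partition `Ω`. Applying `T` below the top levels and sending each top level back to its base gives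
a homeomorphism of finite order, which differs from `T` or `T⁻¹` only on the top two levels over the
base points `z` with `T^h z ≠ z`. It suffices to find a castle whose defect is `μᵢ`-small.

Around the points of period dividing `L = n!`, the itineraries of these points through a clopen
partition give towers, of height the period of the itinerary. Along a sequence of partitions that
separates points, their defect and the non-periodic points they contain shrink to `∅`, so have
small measure. Off these towers no point has period `< n`, which yields a clopen marker `S` that
every orbit visits at most once in `n` steps, and cutting the remaining orbit segments at `S`
gives towers whose defect lies in `S ∪ T⁻¹ S` up to that small set. The sets `T^(-m) S`, `m < n`,
are disjoint, so for some `m` the set `T^(-m) (S ∪ T⁻¹ S)` has measure `≤ 2k / n` for all `μᵢ`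
together; pulling the castle back by `T^m` moves the defect there.
-/

open MeasureTheory Set Function Filter Topology
open scoped ENNReal

namespace Homeomorph

variable {X : Type*} [TopologicalSpace X] (T : X ≃ₜ X)

theorem symm_iterate_iterate (n : ℕ) (x : X) : (⇑T.symm)^[n] ((⇑T)^[n] x) = x :=
  LeftInverse.iterate T.symm_apply_apply n x

theorem iterate_symm_iterate (n : ℕ) (x : X) : (⇑T)^[n] ((⇑T.symm)^[n] x) = x :=
  LeftInverse.iterate T.apply_symm_apply n x

theorem image_iterate (n : ℕ) (s : Set X) : (⇑T)^[n] '' s = (⇑T.symm)^[n] ⁻¹' s := by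
  ext x
  exact ⟨fun ⟨y, hy, hyx⟩ => by rwa [← hyx, mem_preimage, symm_iterate_iterate],
    fun hx => ⟨_, hx, T.iterate_symm_iterate n x⟩⟩

theorem symm_iterate_iterate_of_le {m n : ℕ} (h : n ≤ m) (x : X) :
    (⇑T.symm)^[n] ((⇑T)^[m] x) = (⇑T)^[m - n] x := by
  obtain ⟨k, rfl⟩ := Nat.exists_eq_add_of_le h
  rw [iterate_add_apply, symm_iterate_iterate, Nat.add_sub_cancel_left]

theorem symm_iterate_iterate_of_ge {m n : ℕ} (h : m ≤ n) (x : X) :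
    (⇑T.symm)^[n] ((⇑T)^[m] x) = (⇑T.symm)^[n - m] x := by
  obtain ⟨k, rfl⟩ := Nat.exists_eq_add_of_le h
  rw [add_comm, iterate_add_apply, symm_iterate_iterate, Nat.add_sub_cancel]

theorem iterate_symm_iterate_of_le {m n : ℕ} (h : n ≤ m) (x : X) :
    (⇑T)^[n] ((⇑T.symm)^[m] x) = (⇑T.symm)^[m - n] x := by
  simpa using T.symm.symm_iterate_iterate_of_le h x

theorem iterate_symm_iterate_of_ge {m n : ℕ} (h : m ≤ n) (x : X) :
    (⇑T)^[n] ((⇑T.symm)^[m] x) = (⇑T)^[n - m] x := by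
  simpa using T.symm.symm_iterate_iterate_of_ge h x

theorem commute_iterate_symm_iterate (m n : ℕ) : Function.Commute (⇑T)^[m] (⇑T.symm)^[n] :=
  Function.Commute.iterate_iterate (fun x => by simp) m n

theorem isClopen_image_iterate {s : Set X} (hs : IsClopen s) (n : ℕ) :
    IsClopen ((⇑T)^[n] '' s) := by
  rw [image_iterate]
  exact hs.preimage (T.symm.continuous.iterate n)

theorem isPeriodicPt_iterate_iff {n : ℕ} (m : ℕ) {x : X} :
    IsPeriodicPt T n ((⇑T)^[m] x) ↔ IsPeriodicPt T n x := by
  simp only [IsPeriodicPt, IsFixedPt, ← iterate_add_apply, add_comm n m]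
  rw [iterate_add_apply, (T.injective.iterate m).eq_iff]

theorem image_iterate_preimage_iterate (i m : ℕ) (s : Set X) :
    (⇑T)^[i] '' ((⇑T)^[m] ⁻¹' s) = (⇑T)^[m] ⁻¹' ((⇑T)^[i] '' s) := by
  simp only [image_iterate, ← preimage_comp, (T.commute_iterate_symm_iterate m i).comp_eq]

end Homeomorph

section Castle

variable {Ω : Type*} [TopologicalSpace Ω] (T : Ω ≃ₜ Ω)

/-- A pair `(B, h)` stands for the tower with levels `T^[i] '' B`, `i < h`. A castle on `A` is a
finite family of towers with clopen bases whose levels partition `A`. -/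
structure IsCastleOn (bs : Set (Set Ω × ℕ)) (A : Set Ω) : Prop where
  finite : bs.Finite
  isClopen : ∀ p ∈ bs, IsClopen p.1
  height_pos : ∀ p ∈ bs, 0 < p.2
  disjoint : ∀ p ∈ bs, ∀ q ∈ bs, ∀ i < p.2, ∀ j < q.2, (p, i) ≠ (q, j) →
    Disjoint ((⇑T)^[i] '' p.1) ((⇑T)^[j] '' q.1)
  subset : ∀ p ∈ bs, ∀ i < p.2, (⇑T)^[i] '' p.1 ⊆ A
  cover : ∀ x ∈ A, ∃ p ∈ bs, ∃ i < p.2, x ∈ (⇑T)^[i] '' p.1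

/-- Where the map cycling every tower differs from `T` or `T⁻¹`: the top two levels over the base
points `z` that `T^[h]` does not bring back. -/
def castleDefect (bs : Set (Set Ω × ℕ)) : Set Ω :=
  ⋃ p ∈ bs, ((⇑T)^[p.2 - 1] '' {z ∈ p.1 | (⇑T)^[p.2] z ≠ z} ∪
    (⇑T)^[p.2] '' {z ∈ p.1 | (⇑T)^[p.2] z ≠ z})

variable {T}

theorem castleDefect_union (b₁ b₂ : Set (Set Ω × ℕ)) :
    castleDefect T (b₁ ∪ b₂) = castleDefect T b₁ ∪ castleDefect T b₂ :=
  biUnion_union _ _ _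

theorem IsCastleOn.union {b₁ b₂ : Set (Set Ω × ℕ)} {A : Set Ω} (h₁ : IsCastleOn T b₁ A)
    (h₂ : IsCastleOn T b₂ Aᶜ) : IsCastleOn T (b₁ ∪ b₂) univ where
  finite := h₁.finite.union h₂.finite
  isClopen p hp := hp.elim (h₁.isClopen p) (h₂.isClopen p)
  height_pos p hp := hp.elim (h₁.height_pos p) (h₂.height_pos p)
  disjoint p hp q hq i hi j hj hne := by
    rcases hp with hp | hp <;> rcases hq with hq | hq
    · exact h₁.disjoint p hp q hq i hi j hj hne
    · exact disjoint_compl_right.mono (h₁.subset p hp i hi) (h₂.subset q hq j hj)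
    · exact disjoint_compl_left.mono (h₂.subset p hp i hi) (h₁.subset q hq j hj)
    · exact h₂.disjoint p hp q hq i hi j hj hne
  subset _ _ _ _ := subset_univ _
  cover x _ := by
    by_cases hx : x ∈ A
    · obtain ⟨p, hp, i, hi, hxp⟩ := h₁.cover x hx
      exact ⟨p, Or.inl hp, i, hi, hxp⟩
    · obtain ⟨p, hp, i, hi, hxp⟩ := h₂.cover x hx
      exact ⟨p, Or.inr hp, i, hi, hxp⟩

variable (T) in
def pullbackTower (m : ℕ) (p : Set Ω × ℕ) : Set Ω × ℕ := ((⇑T)^[m] ⁻¹' p.1, p.2)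

theorem IsCastleOn.pullback {bs : Set (Set Ω × ℕ)} (hc : IsCastleOn T bs univ) (m : ℕ) :
    IsCastleOn T (pullbackTower T m '' bs) univ where
  finite := hc.finite.image _
  isClopen := forall_mem_image.2 fun p hp => (hc.isClopen p hp).preimage (T.continuous.iterate m)
  height_pos := forall_mem_image.2 fun p hp => hc.height_pos p hp
  disjoint := forall_mem_image.2 fun p hp => forall_mem_image.2 fun q hq i hi j hj hne => by
    simp only [pullbackTower, T.image_iterate_preimage_iterate]
    exact (hc.disjoint p hp q hq i hi j hj fun h => hne (by simp_all)).preimage _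
  subset _ _ _ _ := subset_univ _
  cover x _ := by
    obtain ⟨p, hp, i, hi, hx⟩ := hc.cover ((⇑T)^[m] x) (mem_univ _)
    refine ⟨_, mem_image_of_mem _ hp, i, hi, ?_⟩
    rwa [pullbackTower, T.image_iterate_preimage_iterate]

theorem castleDefect_pullback (bs : Set (Set Ω × ℕ)) (m : ℕ) :
    castleDefect T (pullbackTower T m '' bs) = (⇑T)^[m] ⁻¹' castleDefect T bs := by
  have hbad (p : Set Ω × ℕ) : {z ∈ (⇑T)^[m] ⁻¹' p.1 | (⇑T)^[p.2] z ≠ z} =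
      (⇑T)^[m] ⁻¹' {z ∈ p.1 | (⇑T)^[p.2] z ≠ z} := by
    ext z
    simp only [mem_ofPred_eq, mem_preimage, ← iterate_add_apply, add_comm p.2 m]
    rw [iterate_add_apply, (T.injective.iterate m).ne_iff]
  simp only [castleDefect, biUnion_image, pullbackTower, hbad, preimage_iUnion, preimage_union,
    T.image_iterate_preimage_iterate]

namespace IsCastleOn

variable {bs : Set (Set Ω × ℕ)}

theorem eq_of_mem_level {A : Set Ω} (hc : IsCastleOn T bs A) {p q : Set Ω × ℕ} {i j : ℕ} {x : Ω}
    (hp : p ∈ bs) (hq : q ∈ bs) (hi : i < p.2) (hj : j < q.2) (hxp : x ∈ (⇑T)^[i] '' p.1)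
    (hxq : x ∈ (⇑T)^[j] '' q.1) : (p, i) = (q, j) :=
  by_contra fun hne => (hc.disjoint p hp q hq i hi j hj hne).ne_of_mem hxp hxq rfl

variable (hc : IsCastleOn T bs univ)
include hc

theorem exists_address (x : Ω) :
    ∃ a : (Set Ω × ℕ) × ℕ, a.1 ∈ bs ∧ a.2 < a.1.2 ∧ x ∈ (⇑T)^[a.2] '' a.1.1 := by
  obtain ⟨p, hp, i, hi, hx⟩ := hc.cover x (mem_univ x)
  exact ⟨(p, i), hp, hi, hx⟩

/-- The tower of `x` and the level of that tower containing `x`. -/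
noncomputable def address (x : Ω) : (Set Ω × ℕ) × ℕ := (hc.exists_address x).choose

theorem address_spec (x : Ω) : (hc.address x).1 ∈ bs ∧ (hc.address x).2 < (hc.address x).1.2 ∧
    x ∈ (⇑T)^[(hc.address x).2] '' (hc.address x).1.1 :=
  (hc.exists_address x).choose_spec

theorem address_eq {p : Set Ω × ℕ} {i : ℕ} {x : Ω} (hp : p ∈ bs) (hi : i < p.2)
    (hx : x ∈ (⇑T)^[i] '' p.1) : hc.address x = (p, i) :=
  let h := hc.address_spec x
  hc.eq_of_mem_level h.1 hp h.2.1 hi h.2.2 hx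

theorem address_eventuallyEq (x : Ω) : hc.address =ᶠ[𝓝 x] fun _ => hc.address x := by
  have h := hc.address_spec x
  filter_upwards [(T.isClopen_image_iterate (hc.isClopen _ h.1) _).isOpen.mem_nhds h.2.2]
    with y hy using hc.address_eq h.1 h.2.1 hy

noncomputable def base (x : Ω) : Ω := (⇑T.symm)^[(hc.address x).2] x

theorem base_mem (x : Ω) : hc.base x ∈ (hc.address x).1.1 := by
  rw [base, ← mem_preimage, ← T.image_iterate]
  exact (hc.address_spec x).2.2

theorem iterate_base (x : Ω) : (⇑T)^[(hc.address x).2] (hc.base x) = x :=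
  T.iterate_symm_iterate _ x

theorem address_iterate_base (x : Ω) {j : ℕ} (hj : j < (hc.address x).1.2) :
    hc.address ((⇑T)^[j] (hc.base x)) = ((hc.address x).1, j) :=
  hc.address_eq (hc.address_spec x).1 hj (mem_image_of_mem _ (hc.base_mem x))

theorem base_iterate_base (x : Ω) {j : ℕ} (hj : j < (hc.address x).1.2) :
    hc.base ((⇑T)^[j] (hc.base x)) = hc.base x := by
  rw [base, hc.address_iterate_base x hj, T.symm_iterate_iterate]

/-- `T` on every level but the top one, which is sent back to the base. -/
noncomputable def cycle (x : Ω) : Ω :=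
  (⇑T)^[((hc.address x).2 + 1) % (hc.address x).1.2] (hc.base x)

theorem cycle_iterate (x : Ω) (j : ℕ) :
    hc.cycle^[j] x = (⇑T)^[((hc.address x).2 + j) % (hc.address x).1.2] (hc.base x) := by
  have hpos := hc.height_pos _ (hc.address_spec x).1
  induction j with
  | zero =>
    rw [add_zero, Nat.mod_eq_of_lt (hc.address_spec x).2.1, iterate_base, iterate_zero_apply]
  | succ j ih =>
    have hlt := Nat.mod_lt ((hc.address x).2 + j) hpos
    rw [iterate_succ_apply', ih, cycle, hc.address_iterate_base x hlt,
      hc.base_iterate_base x hlt, Nat.mod_add_mod, add_assoc]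

theorem cycle_iterate_height (x : Ω) : hc.cycle^[(hc.address x).1.2] x = x := by
  rw [cycle_iterate, Nat.add_mod_right, Nat.mod_eq_of_lt (hc.address_spec x).2.1, iterate_base]

theorem continuous_cycle : Continuous hc.cycle := by
  refine continuous_iff_continuousAt.2 fun x => ?_
  have hcont : Continuous fun y => (⇑T)^[((hc.address x).2 + 1) % (hc.address x).1.2]
      ((⇑T.symm)^[(hc.address x).2] y) :=
    (T.continuous.iterate _).comp (T.symm.continuous.iterate _)
  refine hcont.continuousAt.congr ?_
  filter_upwards [hc.address_eventuallyEq x] with y hy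
  simp only [cycle, base, hy]

theorem cycle_ne_subset : {x | hc.cycle x ≠ T x} ⊆
    ⋃ p ∈ bs, (⇑T)^[p.2 - 1] '' {z ∈ p.1 | (⇑T)^[p.2] z ≠ z} := by
  intro x hx
  obtain ⟨hp, hi, -⟩ := hc.address_spec x
  set i := (hc.address x).2
  set h := (hc.address x).1.2
  have hx' : hc.cycle x ≠ (⇑T)^[i + 1] (hc.base x) := by
    rwa [iterate_succ_apply', iterate_base]
  have htop : i + 1 = h := by
    by_contra hne
    exact hx' (by rw [cycle, Nat.mod_eq_of_lt (lt_of_le_of_ne hi hne)])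
  refine mem_biUnion hp ⟨hc.base x, ⟨hc.base_mem x, fun hfix => hx' ?_⟩, ?_⟩
  · rw [htop, hfix, cycle, htop, Nat.mod_self, iterate_zero_apply]
  · change (⇑T)^[h - 1] (hc.base x) = x
    rw [← htop, Nat.add_sub_cancel, iterate_base]

end IsCastleOn

theorem IsCastleOn.exists_finite_order [CompactSpace Ω] [T2Space Ω] {bs : Set (Set Ω × ℕ)}
    (hc : IsCastleOn T bs univ) :
    ∃ P : Ω ≃ₜ Ω, (∃ N, 1 ≤ N ∧ ∀ x, (⇑P)^[N] x = x) ∧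
      {x | P x ≠ T x} ∪ {x | P.symm x ≠ T.symm x} ⊆ castleDefect T bs := by
  obtain ⟨H, hH⟩ := (hc.finite.image Prod.snd).bddAbove
  set N := H.factorial
  have hN (x : Ω) : hc.cycle^[N] x = x := by
    have hp := (hc.address_spec x).1
    obtain ⟨c, hc'⟩ : _ ∣ N := Nat.dvd_factorial (hc.height_pos _ hp) (hH (mem_image_of_mem _ hp))
    rw [hc', iterate_mul]
    exact iterate_fixed (hc.cycle_iterate_height x) c
  have hN' (x : Ω) : hc.cycle^[N - 1 + 1] x = x := by
    rw [Nat.sub_add_cancel (Nat.factorial_pos H)]; exact hN x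
  let e : Ω ≃ Ω := ⟨hc.cycle, hc.cycle^[N - 1],
    fun x => (iterate_succ_apply _ _ x).symm.trans (hN' x),
    fun x => (iterate_succ_apply' _ _ x).symm.trans (hN' x)⟩
  let P : Ω ≃ₜ Ω := hc.continuous_cycle.homeoOfEquivCompactToT2 (f := e)
  refine ⟨P, ⟨N, Nat.factorial_pos H, hN⟩, ?_⟩
  rintro x (hx | hx)
  · obtain ⟨p, hp, hxp⟩ := mem_iUnion₂.1 (hc.cycle_ne_subset hx)
    exact mem_biUnion hp (Or.inl hxp)
  · have hx' : T.symm x ∈ {x | hc.cycle x ≠ T x} := fun h =>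
      hx (P.symm_apply_eq.2 (by rw [T.apply_symm_apply] at h; exact h.symm))
    obtain ⟨p, hp, z, hz, hzx⟩ := mem_iUnion₂.1 (hc.cycle_ne_subset hx')
    refine mem_biUnion hp (Or.inr ⟨z, hz, ?_⟩)
    rw [← Nat.sub_add_cancel (hc.height_pos p hp), iterate_succ_apply', hzx, T.apply_symm_apply]

end Castle

section Orbits

variable {α β : Type*}

theorem Function.Periodic.eq_of_forall_lt {u v : ℕ → β} {n : ℕ} (hu : Periodic u n)
    (hv : Periodic v n) (hn : 0 < n) (h : ∀ j < n, u j = v j) : u = v :=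
  funext fun j => by rw [← hu.map_mod_nat, ← hv.map_mod_nat, h _ (Nat.mod_lt j hn)]

namespace Function.IsPeriodicPt

variable {g : α → α} {n : ℕ} {a b : α}

theorem iterate_mul_sub_iterate (ha : IsPeriodicPt g n a) (hn : 0 < n) (m : ℕ) :
    g^[n * m - m] (g^[m] a) = a := by
  rw [← iterate_add_apply, Nat.sub_add_cancel (Nat.le_mul_of_pos_left m hn)]
  exact (ha.mul_const m).eq

theorem eq_of_iterate_eq (ha : IsPeriodicPt g n a) (hb : IsPeriodicPt g n b) (hn : 0 < n) {m : ℕ}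
    (h : g^[m] a = g^[m] b) : a = b := by
  rw [← ha.iterate_mul_sub_iterate hn m, h, hb.iterate_mul_sub_iterate hn m]

end Function.IsPeriodicPt

noncomputable def orbitRep (g : α → α) (a : α) : α :=
  @Classical.epsilon α ⟨a⟩ fun b => ∃ k, g^[k] a = b

theorem exists_iterate_eq_orbitRep (g : α → α) (a : α) : ∃ k, g^[k] a = orbitRep g a :=
  Classical.epsilon_spec (p := fun b => ∃ k, g^[k] a = b) ⟨a, 0, rfl⟩

theorem Function.IsPeriodicPt.orbitRep_iterate {g : α → α} {n : ℕ} {a : α}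
    (ha : IsPeriodicPt g n a) (hn : 0 < n) (m : ℕ) : orbitRep g (g^[m] a) = orbitRep g a := by
  unfold orbitRep
  congr 1
  ext b
  constructor
  · rintro ⟨k, rfl⟩
    exact ⟨k + m, iterate_add_apply _ _ _ _⟩
  · rintro ⟨k, rfl⟩
    exact ⟨k + (n * m - m), by rw [iterate_add_apply, ha.iterate_mul_sub_iterate hn]⟩

theorem Function.IsPeriodicPt.orbitRep_orbitRep {g : α → α} {n : ℕ} {a : α}
    (ha : IsPeriodicPt g n a) (hn : 0 < n) : orbitRep g (orbitRep g a) = orbitRep g a := by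
  obtain ⟨k, hk⟩ := exists_iterate_eq_orbitRep g a
  conv_lhs => rw [← hk, ha.orbitRep_iterate hn]

def shift (u : ℕ → β) : ℕ → β := fun j => u (j + 1)

theorem shift_iterate_apply (u : ℕ → β) (m j : ℕ) : shift^[m] u j = u (j + m) := by
  induction m generalizing u with
  | zero => rfl
  | succ m ih => rw [iterate_succ_apply, ih, shift, add_assoc]

theorem isPeriodicPt_shift_iff {u : ℕ → β} {n : ℕ} : IsPeriodicPt shift n u ↔ Periodic u n := by
  simp only [IsPeriodicPt, IsFixedPt, funext_iff, shift_iterate_apply, Periodic]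

def itinerary (g : α → α) (f : α → β) (x : α) : ℕ → β := fun j => f (g^[j] x)

theorem semiconj_itinerary (g : α → α) (f : α → β) : Semiconj (itinerary g f) g shift :=
  fun x => funext fun j => by simp only [itinerary, shift, iterate_succ_apply]

theorem itinerary_iterate (g : α → α) (f : α → β) (m : ℕ) (x : α) :
    itinerary g f (g^[m] x) = shift^[m] (itinerary g f x) :=
  (semiconj_itinerary g f).iterate_right m x

theorem Function.IsPeriodicPt.itinerary {g : α → α} {n : ℕ} {x : α} (hx : IsPeriodicPt g n x)
    (f : α → β) : IsPeriodicPt shift n (itinerary g f x) :=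
  hx.map (semiconj_itinerary g f)

end Orbits

section PeriodicCastle

variable {Ω β : Type*} [TopologicalSpace Ω] (T : Ω ≃ₜ Ω) (L : ℕ) (f : Ω → β)

/-- The window `2 * L` is long enough for every point of the first `L` levels above to still read
a whole period of `u`. -/
def matchSet (u : ℕ → β) : Set Ω := {x | ∀ j < 2 * L, f ((⇑T)^[j] x) = u j}

def periodicItineraries : Set (ℕ → β) := itinerary T f '' {x | IsPeriodicPt T L x}

noncomputable def periodicTower (u : ℕ → β) : Set Ω × ℕ :=
  (matchSet T L f (orbitRep shift u), minimalPeriod shift u)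

/-- One tower for each shift orbit of itineraries of `L`-periodic points. -/
noncomputable def periodicCastle : Set (Set Ω × ℕ) :=
  periodicTower T L f '' periodicItineraries T L f

noncomputable def periodicRegion : Set Ω := ⋃ p ∈ periodicCastle T L f, ⋃ i < p.2, (⇑T)^[i] '' p.1

def itineraryDefect : Set Ω :=
  {z | IsPeriodicPt T L z ∧ ∃ q ∈ Finset.Icc 1 L,
    IsPeriodicPt shift q (itinerary T f z) ∧ ¬IsPeriodicPt T q z}

def nearPeriodic : Set Ω :=
  {x | ∃ i ≤ L, ∃ u ∈ periodicItineraries T L f, (⇑T.symm)^[i] x ∈ matchSet T L f u}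

def periodicBad : Set Ω :=
  itineraryDefect T L f ∪ (nearPeriodic T L f \ {x | IsPeriodicPt T L x})

variable {T L f}

theorem isPeriodicPt_of_mem_periodicItineraries {u : ℕ → β}
    (hu : u ∈ periodicItineraries T L f) : IsPeriodicPt shift L u := by
  obtain ⟨z, hz, rfl⟩ := hu
  exact hz.itinerary f

theorem orbitRep_mem_periodicItineraries {u : ℕ → β} (hu : u ∈ periodicItineraries T L f) :
    orbitRep shift u ∈ periodicItineraries T L f := by
  obtain ⟨z, hz, rfl⟩ := hu
  obtain ⟨k, hk⟩ := exists_iterate_eq_orbitRep shift (itinerary T f z)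
  exact ⟨(⇑T)^[k] z, hz.apply_iterate k, by rw [itinerary_iterate, hk]⟩

theorem minimalPeriod_orbitRep (hL : 0 < L) {u : ℕ → β} (hu : u ∈ periodicItineraries T L f) :
    minimalPeriod shift (orbitRep shift u) = minimalPeriod shift u := by
  obtain ⟨k, hk⟩ := exists_iterate_eq_orbitRep shift u
  rw [← hk, minimalPeriod_apply_iterate
    (mk_mem_periodicPts hL (isPeriodicPt_of_mem_periodicItineraries hu))]

theorem itinerary_eq_of_mem_matchSet (hL : 0 < L) {u : ℕ → β} {z : Ω} (hz : IsPeriodicPt T L z)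
    (hu : IsPeriodicPt shift L u) (hzu : z ∈ matchSet T L f u) : itinerary T f z = u :=
  (isPeriodicPt_shift_iff.1 (hz.itinerary f)).eq_of_forall_lt (isPeriodicPt_shift_iff.1 hu) hL
    fun j hj => hzu j (by omega)

theorem finite_periodicItineraries [Finite β] (hL : 0 < L) :
    (periodicItineraries T L f).Finite := by
  refine Finite.of_finite_image (f := fun u (j : Fin L) => u j) (toFinite _)
    fun u hu v hv huv => ?_
  exact (isPeriodicPt_shift_iff.1 (isPeriodicPt_of_mem_periodicItineraries hu)).eq_of_forall_lt
    (isPeriodicPt_shift_iff.1 (isPeriodicPt_of_mem_periodicItineraries hv)) hL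
    fun j hj => congrFun huv ⟨j, hj⟩

theorem isClopen_matchSet [TopologicalSpace β] [DiscreteTopology β] (hf : Continuous f)
    (u : ℕ → β) : IsClopen (matchSet T L f u) := by
  have : matchSet T L f u = ⋂ j ∈ Finset.range (2 * L), (⇑T)^[j] ⁻¹' (f ⁻¹' {u j}) := by
    ext x
    simp [matchSet]
  rw [this]
  exact isClopen_biInter_finset fun j _ =>
    ((isClopen_discrete _).preimage hf).preimage (T.continuous.iterate j)

theorem disjoint_periodicTower_levels (hL : 0 < L) {u v : ℕ → β}
    (hu : u ∈ periodicItineraries T L f) (hv : v ∈ periodicItineraries T L f) {i j : ℕ}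
    (hi : i < minimalPeriod shift u) (hj : j < minimalPeriod shift v)
    (hne : (periodicTower T L f u, i) ≠ (periodicTower T L f v, j)) :
    Disjoint ((⇑T)^[i] '' (periodicTower T L f u).1) ((⇑T)^[j] '' (periodicTower T L f v).1) := by
  have hup := isPeriodicPt_of_mem_periodicItineraries hu
  have hvp := isPeriodicPt_of_mem_periodicItineraries hv
  set r := orbitRep shift u
  set r' := orbitRep shift v
  have hr : IsPeriodicPt shift L r :=
    isPeriodicPt_of_mem_periodicItineraries (orbitRep_mem_periodicItineraries hu)
  have hr' : IsPeriodicPt shift L r' :=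
    isPeriodicPt_of_mem_periodicItineraries (orbitRep_mem_periodicItineraries hv)
  have hiL := hi.trans_le (hup.minimalPeriod_le hL)
  have hjL := hj.trans_le (hvp.minimalPeriod_le hL)
  rw [disjoint_left]
  rintro x ⟨y, hy, rfl⟩ ⟨y', hy', hyx⟩
  have hy : ∀ k < 2 * L, f ((⇑T)^[k] y) = r k := hy
  have hy' : ∀ k < 2 * L, f ((⇑T)^[k] y') = r' k := hy'
  -- the `L` letters read from the common point identify the two shifted itineraries
  have hshift : shift^[i] r = shift^[j] r' := by
    refine (isPeriodicPt_shift_iff.1 (hr.apply_iterate i)).eq_of_forall_lt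
      (isPeriodicPt_shift_iff.1 (hr'.apply_iterate j)) hL fun k hk => ?_
    rw [shift_iterate_apply, shift_iterate_apply, ← hy (k + i) (by omega),
      ← hy' (k + j) (by omega), iterate_add_apply, iterate_add_apply, hyx]
  have hrr' : r = r' :=
    calc r = orbitRep shift (shift^[i] r) := by
          rw [hr.orbitRep_iterate hL, hup.orbitRep_orbitRep hL]
      _ = orbitRep shift (shift^[j] r') := by rw [hshift]
      _ = r' := by rw [hr'.orbitRep_iterate hL, hvp.orbitRep_orbitRep hL]
  have hmp : minimalPeriod shift u = minimalPeriod shift v := by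
    rw [← minimalPeriod_orbitRep hL hu, ← minimalPeriod_orbitRep hL hv]
    exact congrArg _ hrr'
  have hij : i = j := by
    rw [← hrr'] at hshift
    rw [← minimalPeriod_orbitRep hL hu] at hi
    rw [hmp.symm.trans (minimalPeriod_orbitRep hL hu).symm] at hj
    exact (iterate_eq_iterate_iff_of_lt_minimalPeriod hi hj).1 hshift
  exact hne (by simp only [periodicTower, Prod.mk.injEq]; exact ⟨⟨congrArg _ hrr', hmp⟩, hij⟩)

theorem isCastleOn_periodicCastle [TopologicalSpace β] [DiscreteTopology β] [Finite β]
    (hf : Continuous f) (hL : 0 < L) :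
    IsCastleOn T (periodicCastle T L f) (periodicRegion T L f) where
  finite := (finite_periodicItineraries hL).image _
  isClopen := forall_mem_image.2 fun _ _ => isClopen_matchSet hf _
  height_pos := forall_mem_image.2 fun _ hu =>
    (isPeriodicPt_of_mem_periodicItineraries hu).minimalPeriod_pos hL
  disjoint := forall_mem_image.2 fun _ hu => forall_mem_image.2 fun _ hv _ hi _ hj hne =>
    disjoint_periodicTower_levels hL hu hv hi hj hne
  subset _ hp _ hi _ hx := mem_biUnion hp (mem_iUnion₂.2 ⟨_, hi, hx⟩)
  cover x hx := by
    obtain ⟨p, hp, hx⟩ := mem_iUnion₂.1 hx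
    obtain ⟨i, hi, hx⟩ := mem_iUnion₂.1 hx
    exact ⟨p, hp, i, hi, hx⟩

theorem isClopen_periodicRegion [TopologicalSpace β] [DiscreteTopology β] [Finite β]
    (hf : Continuous f) (hL : 0 < L) : IsClopen (periodicRegion T L f) :=
  ((finite_periodicItineraries hL).image _).isClopen_biUnion fun p hp =>
    (finite_Iio p.2).isClopen_biUnion fun i _ =>
      T.isClopen_image_iterate ((isCastleOn_periodicCastle hf hL).isClopen p hp) i

theorem setOf_isPeriodicPt_subset_periodicRegion (hL : 0 < L) :
    {x | IsPeriodicPt T L x} ⊆ periodicRegion T L f := by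
  intro z hz
  set u := itinerary T f z
  have hu : u ∈ periodicItineraries T L f := ⟨z, hz, rfl⟩
  have hup : IsPeriodicPt shift L u := hz.itinerary f
  set r := orbitRep shift u
  have hr : IsPeriodicPt shift L r :=
    isPeriodicPt_of_mem_periodicItineraries (orbitRep_mem_periodicItineraries hu)
  obtain ⟨a, ha⟩ : ∃ a, shift^[a] u = r := exists_iterate_eq_orbitRep shift u
  -- `z` lies on the level `c` of its tower, `c` being the shift bringing `r` back to `u`
  set c := (L * a - a) % minimalPeriod shift r
  have hc : c < minimalPeriod shift u := by
    rw [← minimalPeriod_orbitRep hL hu]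
    exact Nat.mod_lt _ (hr.minimalPeriod_pos hL)
  have hcu : shift^[c] r = u := by
    rw [iterate_mod_minimalPeriod_eq, ← ha, hup.iterate_mul_sub_iterate hL]
  set y := (⇑T.symm)^[c] z
  have hyz : (⇑T)^[c] y = z := T.iterate_symm_iterate c z
  have hy : IsPeriodicPt T L y := (T.isPeriodicPt_iterate_iff c).1 (hyz ▸ hz)
  have hyr : itinerary T f y = r :=
    (hy.itinerary f).eq_of_iterate_eq hr hL (by rw [← itinerary_iterate, hyz, hcu])
  exact mem_biUnion (mem_image_of_mem _ hu)
    (mem_iUnion₂.2 ⟨c, hc, y, fun j _ => congrFun hyr j, hyz⟩)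

theorem iterate_mem_itineraryDefect {z : Ω} (hz : z ∈ itineraryDefect T L f) (m : ℕ) :
    (⇑T)^[m] z ∈ itineraryDefect T L f := by
  obtain ⟨hzL, q, hq, hqu, hqz⟩ := hz
  refine ⟨(T.isPeriodicPt_iterate_iff m).2 hzL, q, hq, ?_, by rwa [T.isPeriodicPt_iterate_iff]⟩
  rw [itinerary_iterate]
  exact hqu.apply_iterate m

theorem iterate_mem_nearPeriodic {u : ℕ → β} (hu : u ∈ periodicItineraries T L f) {y : Ω}
    (hy : y ∈ matchSet T L f u) {m : ℕ} (hm : m ≤ L) : (⇑T)^[m] y ∈ nearPeriodic T L f :=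
  ⟨m, hm, u, hu, by rwa [T.symm_iterate_iterate]⟩

theorem iterate_mem_periodicBad (hL : 0 < L) {u : ℕ → β} (hu : u ∈ periodicItineraries T L f)
    {z : Ω} (hz : z ∈ (periodicTower T L f u).1)
    (hzq : (⇑T)^[(periodicTower T L f u).2] z ≠ z) {m : ℕ} (hm : m ≤ L) :
    (⇑T)^[m] z ∈ periodicBad T L f := by
  have hr := isPeriodicPt_of_mem_periodicItineraries (orbitRep_mem_periodicItineraries hu)
  have hup := isPeriodicPt_of_mem_periodicItineraries hu
  by_cases hzL : IsPeriodicPt T L z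
  · refine Or.inl (iterate_mem_itineraryDefect ⟨hzL, minimalPeriod shift u, ?_, ?_, hzq⟩ m)
    · exact Finset.mem_Icc.2 ⟨hup.minimalPeriod_pos hL, hup.minimalPeriod_le hL⟩
    · rw [itinerary_eq_of_mem_matchSet hL hzL hr hz, ← minimalPeriod_orbitRep hL hu]
      exact isPeriodicPt_minimalPeriod _ _
  · exact Or.inr ⟨iterate_mem_nearPeriodic (orbitRep_mem_periodicItineraries hu) hz hm,
      fun h => hzL ((T.isPeriodicPt_iterate_iff m).1 h)⟩

theorem castleDefect_periodicCastle_subset (hL : 0 < L) :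
    castleDefect T (periodicCastle T L f) ⊆ periodicBad T L f := by
  intro x hx
  obtain ⟨p, ⟨u, hu, rfl⟩, hx⟩ := mem_iUnion₂.1 hx
  have hq := (isPeriodicPt_of_mem_periodicItineraries hu).minimalPeriod_le hL
  rcases hx with ⟨z, hz, rfl⟩ | ⟨z, hz, rfl⟩
  · exact iterate_mem_periodicBad hL hu hz.1 hz.2 ((Nat.sub_le _ 1).trans hq)
  · exact iterate_mem_periodicBad hL hu hz.1 hz.2 hq

theorem periodicRegion_diff_subset (hL : 0 < L) :
    periodicRegion T L f \ {x | IsPeriodicPt T L x} ⊆ periodicBad T L f := by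
  rintro x ⟨hx, hxL⟩
  obtain ⟨p, ⟨u, hu, rfl⟩, hx⟩ := mem_iUnion₂.1 hx
  obtain ⟨i, hi, y, hy, rfl⟩ := mem_iUnion₂.1 hx
  have hq := (isPeriodicPt_of_mem_periodicItineraries hu).minimalPeriod_le hL
  exact Or.inr ⟨iterate_mem_nearPeriodic (orbitRep_mem_periodicItineraries hu) hy
    (hi.le.trans hq), hxL⟩

theorem measurableSet_periodicBad [T2Space Ω] [MeasurableSpace Ω] [BorelSpace Ω]
    [TopologicalSpace β] [DiscreteTopology β] (hf : Continuous f) :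
    MeasurableSet (periodicBad T L f) := by
  have hper (n : ℕ) : IsClosed {x | IsPeriodicPt T n x} :=
    isClosed_eq (T.continuous.iterate n) continuous_id
  have hitin (q : ℕ) : IsClosed {z | IsPeriodicPt shift q (itinerary T f z)} := by
    simp only [isPeriodicPt_shift_iff, Periodic, ofPred_forall]
    exact isClosed_iInter fun j =>
      isClosed_eq (hf.comp (T.continuous.iterate _)) (hf.comp (T.continuous.iterate _))
  have hdef : itineraryDefect T L f = {x | IsPeriodicPt T L x} ∩ ⋃ q ∈ Finset.Icc 1 L,
      ({z | IsPeriodicPt shift q (itinerary T f z)} \ {x | IsPeriodicPt T q x}) := by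
    ext z
    simp only [itineraryDefect, mem_inter_iff, mem_iUnion, Set.mem_sdiff, mem_ofPred_eq,
      exists_prop]
  have hnear : IsOpen (nearPeriodic T L f) := by
    have : nearPeriodic T L f = ⋃ i ≤ L, ⋃ u ∈ periodicItineraries T L f,
        (⇑T.symm)^[i] ⁻¹' matchSet T L f u := by
      ext x
      simp [nearPeriodic]
    rw [this]
    exact isOpen_iUnion fun i => isOpen_iUnion fun _ => isOpen_iUnion fun u => isOpen_iUnion
      fun _ => (isClopen_matchSet hf u).isOpen.preimage (T.symm.continuous.iterate i)
  rw [periodicBad, hdef]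
  exact ((hper L).measurableSet.inter (Finset.measurableSet_biUnion _ fun q _ =>
    (hitin q).measurableSet.diff (hper q).measurableSet)).union
    (hnear.measurableSet.diff (hper L).measurableSet)

theorem periodicBad_mono {γ : Type*} {f' : Ω → γ} (h : ∀ x y, f' x = f' y → f x = f y) :
    periodicBad T L f' ⊆ periodicBad T L f := by
  rintro x (⟨hxL, q, hq, hqx, hx⟩ | ⟨⟨i, hi, _, ⟨z, hz, rfl⟩, hiz⟩, hxL⟩)
  · exact Or.inl ⟨hxL, q, hq, isPeriodicPt_shift_iff.2 fun j =>
      h _ _ (isPeriodicPt_shift_iff.1 hqx j), hx⟩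
  · exact Or.inr ⟨⟨i, hi, _, ⟨z, hz, rfl⟩, fun j hj => h _ _ (hiz j hj)⟩, hxL⟩

theorem eventually_not_mem_periodicBad (hL : 0 < L) {γ : ℕ → Type*} (F : ∀ k, Ω → γ k)
    (hF : ∀ x y, x ≠ y → ∀ᶠ k in atTop, F k x ≠ F k y) (x : Ω) :
    ∀ᶠ k in atTop, x ∉ periodicBad T L (F k) := by
  by_cases hx : IsPeriodicPt T L x
  · have hsep : ∀ᶠ k in atTop, ∀ q ∈ Finset.Icc 1 L, ¬IsPeriodicPt T q x →
        F k ((⇑T)^[q] x) ≠ F k x := by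
      refine (eventually_all_finset _).2 fun q _ => ?_
      by_cases hq : IsPeriodicPt T q x
      · exact .of_forall fun _ h => absurd hq h
      · exact (hF _ _ hq).mono fun _ hk _ => hk
    filter_upwards [hsep] with k hk
    rintro (⟨-, q, hq, hqx, hxq⟩ | ⟨-, hxL⟩)
    · exact hk q hq hxq (by simpa [itinerary] using isPeriodicPt_shift_iff.1 hqx 0)
    · exact hxL hx
  · -- a point near the periodic ones would have `f (T^[L] y) = f y` for some `y = T^[-i] x`
    have hsep : ∀ᶠ k in atTop, ∀ i ∈ Finset.range (L + 1),
        F k ((⇑T)^[L] ((⇑T.symm)^[i] x)) ≠ F k ((⇑T.symm)^[i] x) :=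
      (eventually_all_finset _).2 fun i _ => hF _ _ fun h => hx (by
        simpa only [T.iterate_symm_iterate] using (T.isPeriodicPt_iterate_iff i).2 h)
    filter_upwards [hsep] with k hk
    rintro (⟨hxL, -⟩ | ⟨⟨i, hi, _, ⟨z, hz, rfl⟩, hiz⟩, -⟩)
    · exact hx hxL
    · refine hk i (Finset.mem_range.2 (by omega)) ?_
      have h0 := hiz 0 (by omega)
      rw [iterate_zero_apply] at h0
      rw [hiz L (by omega), h0]
      simp only [itinerary, hz.eq, iterate_zero_apply]

end PeriodicCastle

section Marker

variable {Ω : Type*} [TopologicalSpace Ω] (T : Ω ≃ₜ Ω) (n : ℕ)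

def IsOrbitSeparated (S : Set Ω) : Prop := ∀ x ∈ S, ∀ k, 0 < k → k < n → (⇑T)^[k] x ∉ S

def orbitNbhd (D : Set Ω) : Set Ω := ⋃ i ∈ Finset.range n, ((⇑T)^[i] '' D ∪ (⇑T)^[i] ⁻¹' D)

def greedyMarker (C : Ω → Set Ω) : List Ω → Set Ω
  | [] => ∅
  | x :: l => greedyMarker C l ∪ (C x \ orbitNbhd T n (greedyMarker C l))

variable {T n}

theorem IsOrbitSeparated.preimage {S : Set Ω} (hS : IsOrbitSeparated T n S) :
    IsOrbitSeparated T n (T ⁻¹' S) := fun x hx k hk hkn hTx =>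
  hS (T x) hx k hk hkn
    (by rwa [mem_preimage, ← iterate_succ_apply' (⇑T) k x, iterate_succ_apply] at hTx)

theorem isClopen_orbitNbhd {D : Set Ω} (hD : IsClopen D) : IsClopen (orbitNbhd T n D) :=
  isClopen_biUnion_finset fun i _ =>
    (T.isClopen_image_iterate hD i).union (hD.preimage (T.continuous.iterate i))

theorem orbitNbhd_mono {D D' : Set Ω} (h : D ⊆ D') : orbitNbhd T n D ⊆ orbitNbhd T n D' :=
  iUnion₂_mono fun _ _ => union_subset_union (image_mono h) (preimage_mono h)

theorem isClopen_greedyMarker {C : Ω → Set Ω} (hC : ∀ x, IsClopen (C x)) (l : List Ω) :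
    IsClopen (greedyMarker T n C l) := by
  induction l with
  | nil => exact isClopen_empty
  | cons x l ih => exact ih.union ((hC x).diff (isClopen_orbitNbhd ih))

theorem isOrbitSeparated_greedyMarker {C : Ω → Set Ω} (hC : ∀ x, IsOrbitSeparated T n (C x))
    (l : List Ω) : IsOrbitSeparated T n (greedyMarker T n C l) := by
  induction l with
  | nil => exact fun y hy => absurd hy (notMem_empty y)
  | cons x l ih =>
    intro y hy k hk hkn hTy
    have hk' : k ∈ Finset.range n := Finset.mem_range.2 hkn
    rcases hy with hy | ⟨hyC, hyN⟩ <;> rcases hTy with hTy | ⟨hTyC, hTyN⟩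
    · exact ih y hy k hk hkn hTy
    · exact hTyN (mem_biUnion hk' (Or.inl (mem_image_of_mem _ hy)))
    · exact hyN (mem_biUnion hk' (Or.inr hTy))
    · exact hC x y hyC k hk hkn hTyC

theorem subset_greedyMarker_union {C : Ω → Set Ω} {l : List Ω} {x : Ω} (hx : x ∈ l) :
    C x ⊆ greedyMarker T n C l ∪ orbitNbhd T n (greedyMarker T n C l) := by
  induction l with
  | nil => exact absurd hx List.not_mem_nil
  | cons z l ih =>
    have hmono : greedyMarker T n C l ⊆ greedyMarker T n C (z :: l) := subset_union_left
    intro y hy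
    rcases List.mem_cons.1 hx with rfl | hxl
    · by_cases hyN : y ∈ orbitNbhd T n (greedyMarker T n C l)
      · exact Or.inr (orbitNbhd_mono hmono hyN)
      · exact Or.inl (Or.inr ⟨hy, hyN⟩)
    · exact (ih hxl hy).imp (fun h => hmono h) (fun h => orbitNbhd_mono hmono h)

theorem exists_isClopen_isOrbitSeparated [T2Space Ω] [CompactSpace Ω]
    [TotallyDisconnectedSpace Ω] {x : Ω} (hx : ∀ k, 0 < k → k < n → (⇑T)^[k] x ≠ x) :
    ∃ C, IsClopen C ∧ x ∈ C ∧ IsOrbitSeparated T n C := by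
  have hU (k : ℕ) : ∃ U : Set Ω, IsClopen U ∧ x ∈ U ∧ (0 < k → k < n → (⇑T)^[k] x ∉ U) := by
    by_cases hk : 0 < k ∧ k < n
    · obtain ⟨U, hU, hxU, hkU⟩ := exists_isClopen_of_totally_separated (hx k hk.1 hk.2).symm
      exact ⟨U, hU, hxU, fun _ _ => hkU⟩
    · exact ⟨univ, isClopen_univ, mem_univ x, fun h h' => absurd ⟨h, h'⟩ hk⟩
  choose U hUc hxU hkU using hU
  -- on `U k ∩ T^[-k] (U k)ᶜ`, `T^[k]` leads out of `U k`
  refine ⟨⋂ k ∈ Finset.Ioo 0 n, (U k ∩ (⇑T)^[k] ⁻¹' (U k)ᶜ),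
    isClopen_biInter_finset fun k _ =>
      (hUc k).inter ((hUc k).compl.preimage (T.continuous.iterate k)),
    mem_iInter₂.2 fun k hk => ⟨hxU k, hkU k (Finset.mem_Ioo.1 hk).1 (Finset.mem_Ioo.1 hk).2⟩,
    fun y hy k hk hkn hTy => ?_⟩
  have hk' : k ∈ Finset.Ioo 0 n := Finset.mem_Ioo.2 ⟨hk, hkn⟩
  exact (mem_iInter₂.1 hy k hk').2 (mem_iInter₂.1 hTy k hk').1

theorem exists_marker [T2Space Ω] [CompactSpace Ω] [TotallyDisconnectedSpace Ω] (hn : 0 < n)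
    {A : Set Ω} (hA : IsClosed A) (hper : ∀ x ∈ A, ∀ k, 0 < k → k < n → (⇑T)^[k] x ≠ x) :
    ∃ S, IsClopen S ∧ IsOrbitSeparated T n S ∧
      ∀ x ∈ A, ∃ i < n, (⇑T)^[i] x ∈ S ∨ (⇑T.symm)^[i] x ∈ S := by
  have hC (x : Ω) : ∃ C, IsClopen C ∧ (x ∈ A → x ∈ C) ∧ IsOrbitSeparated T n C := by
    by_cases hx : x ∈ A
    · obtain ⟨C, hC, hxC, hsep⟩ := exists_isClopen_isOrbitSeparated (hper x hx)
      exact ⟨C, hC, fun _ => hxC, hsep⟩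
    · exact ⟨∅, isClopen_empty, fun h => absurd h hx, fun y hy => absurd hy (notMem_empty y)⟩
  choose C hCc hxC hCsep using hC
  obtain ⟨t, ht⟩ := hA.isCompact.elim_finite_subcover C (fun x => (hCc x).isOpen)
    fun x hx => mem_iUnion.2 ⟨x, hxC x hx⟩
  refine ⟨greedyMarker T n C t.toList, isClopen_greedyMarker hCc _,
    isOrbitSeparated_greedyMarker hCsep _, fun x hx => ?_⟩
  obtain ⟨c, hc, hxc⟩ := mem_iUnion₂.1 (ht hx)
  rcases subset_greedyMarker_union (Finset.mem_toList.2 hc) hxc with h | h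
  · exact ⟨0, hn, Or.inl h⟩
  · obtain ⟨i, hi, hxi⟩ := mem_iUnion₂.1 h
    rcases hxi with hxi | hxi
    · exact ⟨i, Finset.mem_range.1 hi, Or.inr (by rwa [← mem_preimage, ← T.image_iterate])⟩
    · exact ⟨i, Finset.mem_range.1 hi, Or.inl hxi⟩

end Marker

section Towers

variable {Ω : Type*} [TopologicalSpace Ω] (T : Ω ≃ₜ Ω) (A S : Set Ω)

/-- A run of `A` starts `j` steps before `x`. -/
def backCut (j : ℕ) : Set Ω := (⇑T.symm)^[j] ⁻¹' S ∪ (⇑T.symm)^[j + 1] ⁻¹' Aᶜ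

def fwdCut (j : ℕ) : Set Ω := (⇑T)^[j] ⁻¹' (S ∪ Aᶜ)

noncomputable def backTime (x : Ω) : ℕ := sInf {j | x ∈ backCut T A S j}

noncomputable def fwdTime (x : Ω) : ℕ := sInf {j | 0 < j ∧ x ∈ fwdCut T A S j}

def cutBase (ℓ : ℕ) : Set Ω :=
  A ∩ backCut T A S 0 ∩ (fwdCut T A S ℓ ∩ ⋂ j ∈ Finset.Ico 1 ℓ, (fwdCut T A S j)ᶜ)

/-- The orbit segments in `A`, cut at the visits to `S`, stacked into towers by their length. -/
def cutCastle (n : ℕ) : Set (Set Ω × ℕ) := (fun ℓ => (cutBase T A S ℓ, ℓ)) '' Icc 1 (4 * n)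

variable {T A S}

theorem not_mem_fwdCut {x : Ω} {j : ℕ} (hj : 0 < j) (hjx : j < fwdTime T A S x) :
    x ∉ fwdCut T A S j :=
  fun h => Nat.notMem_of_lt_sInf hjx ⟨hj, h⟩

theorem not_mem_backCut {x : Ω} {j : ℕ} (hjx : j < backTime T A S x) : x ∉ backCut T A S j :=
  fun h => Nat.notMem_of_lt_sInf hjx h

theorem iterate_symm_mem_of_le_backTime {x : Ω} (hx : x ∈ A) {j : ℕ}
    (hj : j ≤ backTime T A S x) : (⇑T.symm)^[j] x ∈ A := by
  cases j with
  | zero => exact hx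
  | succ j => exact by_contra fun h =>
      not_mem_backCut (A := A) (S := S) (show j < backTime T A S x by omega) (Or.inr h)

theorem iterate_mem_of_lt_fwdTime {x : Ω} (hx : x ∈ A) {j : ℕ} (hj : j < fwdTime T A S x) :
    (⇑T)^[j] x ∈ A := by
  cases j with
  | zero => exact hx
  | succ j => exact by_contra fun h => not_mem_fwdCut (A := A) (S := S) (by omega) hj (Or.inr h)

theorem fwdTime_eq {x : Ω} {ℓ : ℕ} (hℓ : 0 < ℓ) (hx : x ∈ fwdCut T A S ℓ)
    (hmin : ∀ j, 0 < j → j < ℓ → x ∉ fwdCut T A S j) : fwdTime T A S x = ℓ :=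
  IsLeast.csInf_eq ⟨⟨hℓ, hx⟩, fun j ⟨hj, hjx⟩ => not_lt.1 fun hlt => hmin j hj hlt hjx⟩

variable {n : ℕ} (hn : 0 < n) (hcov : ∀ x ∈ A, ∃ i < n, (⇑T)^[i] x ∈ S ∨ (⇑T.symm)^[i] x ∈ S)
include hn hcov

theorem exists_fwdCut (x : Ω) : ∃ j, 0 < j ∧ j ≤ 2 * n ∧ x ∈ fwdCut T A S j := by
  by_cases hTn : (⇑T)^[n] x ∈ A
  · obtain ⟨i, hi, h | h⟩ := hcov _ hTn
    · exact ⟨i + n, by omega, by omega, Or.inl (by rwa [iterate_add_apply])⟩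
    · exact ⟨n - i, by omega, by omega, Or.inl (by rwa [T.symm_iterate_iterate_of_le hi.le] at h)⟩
  · exact ⟨n, hn, by omega, Or.inr hTn⟩

theorem exists_backCut (x : Ω) : ∃ j ≤ 2 * n, x ∈ backCut T A S j := by
  by_cases hex : ∃ j, 0 < j ∧ j ≤ n ∧ (⇑T.symm)^[j] x ∉ A
  · obtain ⟨j, hj, hjn, hjA⟩ := hex
    exact ⟨j - 1, by omega, Or.inr (by rwa [Nat.sub_add_cancel hj])⟩
  · push Not at hex
    obtain ⟨i, hi, h | h⟩ := hcov _ (hex n hn le_rfl)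
    · exact ⟨n - i, by omega, Or.inl (by rwa [T.iterate_symm_iterate_of_le hi.le] at h)⟩
    · exact ⟨i + n, by omega, Or.inl (by rw [mem_preimage, iterate_add_apply]; exact h)⟩

theorem fwdTime_spec (x : Ω) : 0 < fwdTime T A S x ∧ fwdTime T A S x ≤ 2 * n ∧
    x ∈ fwdCut T A S (fwdTime T A S x) := by
  obtain ⟨j, hj, hjn, hjx⟩ := exists_fwdCut hn hcov x
  have hjs : j ∈ {j | 0 < j ∧ x ∈ fwdCut T A S j} := ⟨hj, hjx⟩
  have hmem := Nat.sInf_mem ⟨j, hjs⟩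
  exact ⟨hmem.1, (Nat.sInf_le hjs).trans hjn, hmem.2⟩

theorem backTime_spec (x : Ω) :
    backTime T A S x ≤ 2 * n ∧ x ∈ backCut T A S (backTime T A S x) := by
  obtain ⟨j, hjn, hjx⟩ := exists_backCut hn hcov x
  exact ⟨(Nat.sInf_le hjx).trans hjn, Nat.sInf_mem (s := {j | x ∈ backCut T A S j}) ⟨j, hjx⟩⟩

theorem backTime_eq_zero_iff (x : Ω) :
    backTime T A S x = 0 ↔ x ∈ backCut T A S 0 :=
  ⟨fun h => h ▸ (backTime_spec hn hcov x).2, fun h => Nat.eq_zero_of_le_zero (Nat.sInf_le h)⟩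

theorem level_of_backTime_eq_zero {y : Ω} (hy : y ∈ A) (hy0 : backTime T A S y = 0) {i : ℕ}
    (hi : i < fwdTime T A S y) : (⇑T)^[i] y ∈ A ∧ backTime T A S ((⇑T)^[i] y) = i ∧
      fwdTime T A S ((⇑T)^[i] y) = fwdTime T A S y - i := by
  have hb0 : y ∈ backCut T A S 0 := (backTime_eq_zero_iff hn hcov y).1 hy0
  have hf := fwdTime_spec hn hcov y
  refine ⟨iterate_mem_of_lt_fwdTime hy hi, IsLeast.csInf_eq ⟨?_, fun j hj => ?_⟩,
    fwdTime_eq (by omega) ?_ fun j hj hji hjx => ?_⟩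
  · rcases hb0 with h | h
    · exact Or.inl (by rw [mem_preimage, T.symm_iterate_iterate]; exact h)
    · exact Or.inr (by rw [mem_preimage, iterate_succ_apply', T.symm_iterate_iterate]; exact h)
  · refine not_lt.1 fun hji => ?_
    rcases hj with h | h
    · rw [mem_preimage, T.symm_iterate_iterate_of_le hji.le] at h
      exact not_mem_fwdCut (A := A) (S := S) (by omega) (by omega) (Or.inl h)
    · rw [mem_preimage, T.symm_iterate_iterate_of_le (by omega)] at h
      exact h (iterate_mem_of_lt_fwdTime (S := S) hy (by omega))
  · rw [fwdCut, mem_preimage, ← iterate_add_apply, Nat.sub_add_cancel hi.le]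
    exact hf.2.2
  · rw [fwdCut, mem_preimage, ← iterate_add_apply] at hjx
    exact not_mem_fwdCut (A := A) (S := S) (by omega) (by omega) hjx

theorem base_of_mem {x : Ω} (hx : x ∈ A) :
    (⇑T.symm)^[backTime T A S x] x ∈ A ∧ backTime T A S ((⇑T.symm)^[backTime T A S x] x) = 0 ∧
      fwdTime T A S ((⇑T.symm)^[backTime T A S x] x) = backTime T A S x + fwdTime T A S x := by
  set b := backTime T A S x
  have hyA := iterate_symm_mem_of_le_backTime hx (le_refl b)
  have hb := backTime_spec hn hcov x
  have hf := fwdTime_spec hn hcov x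
  refine ⟨hyA, (backTime_eq_zero_iff hn hcov _).2 ?_, fwdTime_eq (by omega) ?_ ?_⟩
  · rcases hb.2 with h | h
    · exact Or.inl h
    · exact Or.inr (by rw [mem_preimage, ← iterate_add_apply, add_comm]; exact h)
  · rw [fwdCut, mem_preimage, T.iterate_symm_iterate_of_ge (by omega), Nat.add_sub_cancel_left]
    exact hf.2.2
  · intro j hj hjb hjx
    rw [fwdCut, mem_preimage] at hjx
    by_cases hjb' : j ≤ b
    · rw [T.iterate_symm_iterate_of_le hjb'] at hjx
      rcases hjx with h | h
      · exact not_mem_backCut (A := A) (S := S) (show b - j < b by omega) (Or.inl h)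
      · exact h (iterate_symm_mem_of_le_backTime (S := S) hx (by omega))
    · rw [T.iterate_symm_iterate_of_ge (by omega)] at hjx
      exact not_mem_fwdCut (A := A) (S := S) (by omega) (by omega) hjx

theorem image_iterate_baseSet {ℓ i : ℕ} (hi : i < ℓ) :
    (⇑T)^[i] '' {x | x ∈ A ∧ backTime T A S x = 0 ∧ fwdTime T A S x = ℓ} =
      {x | x ∈ A ∧ backTime T A S x = i ∧ backTime T A S x + fwdTime T A S x = ℓ} := by
  ext x
  constructor
  · rintro ⟨y, ⟨hyA, hy0, rfl⟩, rfl⟩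
    obtain ⟨h1, h2, h3⟩ := level_of_backTime_eq_zero hn hcov hyA hy0 hi
    exact ⟨h1, h2, by omega⟩
  · rintro ⟨hxA, rfl, hxs⟩
    obtain ⟨h1, h2, h3⟩ := base_of_mem hn hcov hxA
    exact ⟨_, ⟨h1, h2, h3.trans hxs⟩, T.iterate_symm_iterate _ x⟩

theorem cutBase_eq {ℓ : ℕ} (hℓ : 0 < ℓ) :
    cutBase T A S ℓ = {x | x ∈ A ∧ backTime T A S x = 0 ∧ fwdTime T A S x = ℓ} := by
  ext x
  constructor
  · rintro ⟨⟨hxA, hx0⟩, hxℓ, hxmin⟩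
    refine ⟨hxA, (backTime_eq_zero_iff hn hcov x).2 hx0, fwdTime_eq hℓ hxℓ fun j hj hjℓ => ?_⟩
    exact mem_iInter₂.1 hxmin j (Finset.mem_Ico.2 ⟨hj, hjℓ⟩)
  · rintro ⟨hxA, hx0, rfl⟩
    exact ⟨⟨hxA, (backTime_eq_zero_iff hn hcov x).1 hx0⟩, (fwdTime_spec hn hcov x).2.2,
      mem_iInter₂.2 fun j hj => not_mem_fwdCut (Finset.mem_Ico.1 hj).1 (Finset.mem_Ico.1 hj).2⟩

omit hn hcov in
theorem isClopen_cutBase (hA : IsClopen A) (hS : IsClopen S) (ℓ : ℕ) :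
    IsClopen (cutBase T A S ℓ) := by
  have hcut (j : ℕ) : IsClopen (fwdCut T A S j) :=
    (hS.union hA.compl).preimage (T.continuous.iterate j)
  refine (hA.inter ((hS.preimage (T.symm.continuous.iterate 0)).union
    (hA.compl.preimage (T.symm.continuous.iterate 1)))).inter ((hcut ℓ).inter ?_)
  exact isClopen_biInter_finset fun j _ => (hcut j).compl

theorem isCastleOn_cutCastle (hA : IsClopen A) (hS : IsClopen S) :
    IsCastleOn T (cutCastle T A S n) A where
  finite := (finite_Icc 1 (4 * n)).image _
  isClopen := forall_mem_image.2 fun ℓ _ => isClopen_cutBase hA hS ℓ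
  height_pos := forall_mem_image.2 fun ℓ hℓ => hℓ.1
  disjoint := forall_mem_image.2 fun ℓ hℓ => forall_mem_image.2 fun ℓ' hℓ' i hi j hj hne => by
    simp only [cutBase_eq hn hcov hℓ.1, cutBase_eq hn hcov hℓ'.1, image_iterate_baseSet hn hcov hi,
      image_iterate_baseSet hn hcov hj]
    refine disjoint_left.2 fun x ⟨_, hxi, hxℓ⟩ ⟨_, hxj, hxℓ'⟩ => hne ?_
    have : ℓ = ℓ' := by omega
    simp only [this, ← hxi, ← hxj]
  subset := forall_mem_image.2 fun ℓ hℓ i hi => by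
    rw [cutBase_eq hn hcov hℓ.1, image_iterate_baseSet hn hcov hi]
    exact fun x hx => hx.1
  cover x hx := by
    have hb := (backTime_spec hn hcov x).1
    have hf := fwdTime_spec hn hcov x
    set ℓ := backTime T A S x + fwdTime T A S x
    refine ⟨_, mem_image_of_mem _ (⟨by omega, by omega⟩ : ℓ ∈ Icc 1 (4 * n)),
      backTime T A S x, by simp only; omega, ?_⟩
    rw [cutBase_eq hn hcov (by omega), image_iterate_baseSet hn hcov (by omega)]
    exact ⟨hx, rfl, rfl⟩

theorem castleDefect_cutCastle_subset (hA : IsClopen A) (hS : IsClopen S) {B : Set Ω}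
    (hB : ∀ x ∉ A, T.symm x ∈ A → x ∈ B) :
    castleDefect T (cutCastle T A S n) ⊆ S ∪ T ⁻¹' S ∪ (B ∪ T ⁻¹' B) := by
  have hexit : ∀ p ∈ cutCastle T A S n, ∀ z ∈ p.1,
      (⇑T)^[p.2] z = T ((⇑T)^[p.2 - 1] z) ∧ (⇑T)^[p.2] z ∈ S ∪ B := by
    rintro _ ⟨ℓ, hℓ, rfl⟩ z hz
    have hpred : (⇑T)^[ℓ] z = T ((⇑T)^[ℓ - 1] z) := by
      conv_lhs => rw [← Nat.sub_add_cancel hℓ.1]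
      exact iterate_succ_apply' _ _ _
    refine ⟨hpred, hz.2.1.imp_right fun hzA => hB _ hzA ?_⟩
    rw [hpred, T.symm_apply_apply]
    exact (isCastleOn_cutCastle hn hcov hA hS).subset _ ⟨ℓ, hℓ, rfl⟩ (ℓ - 1)
      (Nat.sub_lt hℓ.1 one_pos) (mem_image_of_mem _ hz)
  intro x hx
  obtain ⟨p, hp, ⟨z, hz, rfl⟩ | ⟨z, hz, rfl⟩⟩ := mem_iUnion₂.1 hx
  · obtain ⟨hpred, h | h⟩ := hexit p hp z hz.1 <;> rw [hpred] at h
    · exact Or.inl (Or.inr h)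
    · exact Or.inr (Or.inr h)
  · obtain ⟨-, h | h⟩ := hexit p hp z hz.1
    · exact Or.inl (Or.inl h)
    · exact Or.inr (Or.inl h)

end Towers

theorem exists_separating_codes {Ω : Type*} [TopologicalSpace Ω] [T2Space Ω] [CompactSpace Ω]
    [TotallyDisconnectedSpace Ω] [SecondCountableTopology Ω] :
    ∃ F : (k : ℕ) → Ω → (Fin k → Bool), (∀ k, Continuous (F k)) ∧
      (∀ k x y, F (k + 1) x = F (k + 1) y → F k x = F k y) ∧
      ∀ x y, x ≠ y → ∀ᶠ k in atTop, F k x ≠ F k y := by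
  obtain ⟨s, hs, hsc, hbasis⟩ := isTopologicalBasis_isClopen.exists_countable (α := Ω)
  obtain ⟨C, hC⟩ := (hsc.insert ∅).exists_eq_range (insert_nonempty _ _)
  have hCc (j : ℕ) : IsClopen (C j) := by
    rcases (hC ▸ mem_range_self j : C j ∈ insert ∅ s) with h | h
    · exact h ▸ isClopen_empty
    · exact hs h
  refine ⟨fun k x j => (C j).boolIndicator x,
    fun k => continuous_pi fun j => (continuous_boolIndicator_iff_isClopen _).2 (hCc j),
    fun k x y h => funext fun j => congrFun h j.castSucc, fun x y hxy => ?_⟩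
  obtain ⟨t, ht, hxt, hty⟩ :=
    hbasis.exists_subset_of_mem_open (mem_compl_singleton_iff.2 hxy) isOpen_compl_singleton
  obtain ⟨j, rfl⟩ : t ∈ range C := hC ▸ mem_insert_of_mem _ ht
  refine eventually_atTop.2 ⟨j + 1, fun k hk h => ?_⟩
  have hj := congrFun h ⟨j, hk⟩
  simp only [boolIndicator, hxt, if_true] at hj
  exact hty (by simpa using hj.symm) rfl

section Frequency

variable {Ω : Type*} [TopologicalSpace Ω] [MeasurableSpace Ω] [BorelSpace Ω]
  {T : Ω ≃ₜ Ω} {n : ℕ} {S : Set Ω}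

theorem IsOrbitSeparated.sum_measure_preimage_iterate_le (hS : IsOrbitSeparated T n S)
    (hSm : MeasurableSet S) (μ : Measure Ω) :
    ∑ m ∈ Finset.range n, μ ((⇑T)^[m] ⁻¹' S) ≤ μ univ := by
  have hdisj {a b : ℕ} (hab : a < b) (hb : b < n) :
      Disjoint ((⇑T)^[a] ⁻¹' S) ((⇑T)^[b] ⁻¹' S) := by
    refine disjoint_left.2 fun x hxa hxb => hS _ hxa (b - a) (by omega) (by omega) ?_
    rwa [← iterate_add_apply, Nat.sub_add_cancel hab.le]
  refine sum_measure_le_measure_univ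
    (fun m _ => (hSm.preimage (T.continuous.iterate m).measurable).nullMeasurableSet)
    fun a ha b hb hab => Disjoint.aedisjoint ?_
  rcases lt_or_gt_of_ne hab with h | h
  · exact hdisj h (Finset.mem_range.1 hb)
  · exact (hdisj h (Finset.mem_range.1 ha)).symm

/-- Averaging over the first `n` translates, which an orbit-separated `S` visits at most once. -/
theorem IsOrbitSeparated.exists_iterate_measure_preimage_lt (hS : IsOrbitSeparated T n S)
    (hSm : MeasurableSet S) {ι : Type*} [Fintype ι] (μ : ι → Measure Ω)
    [∀ i, IsProbabilityMeasure (μ i)] {c : ℝ≥0∞} (hc : ((2 * Fintype.card ι : ℕ) : ℝ≥0∞) < n * c) :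
    ∃ m < n, ∀ i, μ i ((⇑T)^[m] ⁻¹' (S ∪ T ⁻¹' S)) < c := by
  have hsum : ∑ m ∈ Finset.range n, ∑ i, μ i ((⇑T)^[m] ⁻¹' (S ∪ T ⁻¹' S)) <
      ∑ m ∈ Finset.range n, c :=
    calc ∑ m ∈ Finset.range n, ∑ i, μ i ((⇑T)^[m] ⁻¹' (S ∪ T ⁻¹' S))
        ≤ ∑ i, (∑ m ∈ Finset.range n, μ i ((⇑T)^[m] ⁻¹' S) +
            ∑ m ∈ Finset.range n, μ i ((⇑T)^[m] ⁻¹' (T ⁻¹' S))) := by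
          rw [Finset.sum_comm]
          gcongr with i
          rw [← Finset.sum_add_distrib]
          gcongr with m
          rw [preimage_union]
          exact measure_union_le _ _
      _ ≤ ∑ _i : ι, (1 + 1) := by
          gcongr with i
          · exact (hS.sum_measure_preimage_iterate_le hSm (μ i)).trans_eq measure_univ
          · exact (hS.preimage.sum_measure_preimage_iterate_le
              (hSm.preimage T.continuous.measurable) (μ i)).trans_eq measure_univ
      _ = ((2 * Fintype.card ι : ℕ) : ℝ≥0∞) := by
          rw [Finset.sum_const, Finset.card_univ, nsmul_eq_mul, one_add_one_eq_two, mul_comm]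
          push_cast
          rfl
      _ < n * c := hc
      _ = ∑ m ∈ Finset.range n, c := by rw [Finset.sum_const, Finset.card_range, nsmul_eq_mul]
  obtain ⟨m, hm, hlt⟩ := Finset.exists_lt_of_sum_lt hsum
  exact ⟨m, Finset.mem_range.1 hm, fun i =>
    (Finset.single_le_sum (fun i _ => zero_le) (Finset.mem_univ i)).trans_lt hlt⟩

end Frequency

theorem exists_code_periodicBad_lt {Ω : Type*} [TopologicalSpace Ω] [CompactSpace Ω] [T2Space Ω]
    [TotallyDisconnectedSpace Ω] [SecondCountableTopology Ω] [MeasurableSpace Ω] [BorelSpace Ω]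
    (T : Ω ≃ₜ Ω) {L : ℕ} (hL : 0 < L) (n : ℕ) {ι : Type*} [Finite ι] (μ : ι → Measure Ω)
    [∀ i, IsFiniteMeasure (μ i)] {δ : ℝ≥0∞} (hδ : 0 < δ) :
    ∃ k, ∃ f : Ω → (Fin k → Bool), Continuous f ∧ ∀ i, ∀ m < n,
      μ i ((⇑T)^[m] ⁻¹' (periodicBad T L f ∪ T ⁻¹' periodicBad T L f)) < δ := by
  obtain ⟨F, hFc, hFmono, hFsep⟩ := exists_separating_codes (Ω := Ω)
  set G : ℕ → Set Ω := fun k => periodicBad T L (F k) ∪ T ⁻¹' periodicBad T L (F k)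
  have hGm (k : ℕ) : MeasurableSet (G k) :=
    (measurableSet_periodicBad (hFc k)).union
      ((measurableSet_periodicBad (hFc k)).preimage T.continuous.measurable)
  have hGanti : Antitone G := antitone_nat_of_succ_le fun k =>
    union_subset_union (periodicBad_mono (hFmono k)) (preimage_mono (periodicBad_mono (hFmono k)))
  have hGempty : ⋂ k, G k = ∅ := eq_empty_of_forall_notMem fun x hx => by
    obtain ⟨k, hkx, hkTx⟩ := ((eventually_not_mem_periodicBad hL F hFsep x).and
      (eventually_not_mem_periodicBad hL F hFsep (T x))).exists
    exact (mem_iInter.1 hx k).elim hkx hkTx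
  have hsmall : ∀ᶠ k in atTop, ∀ i, ∀ m ∈ Finset.range n, μ i ((⇑T)^[m] ⁻¹' G k) < δ := by
    refine eventually_all.2 fun i => (eventually_all_finset _).2 fun m _ => ?_
    have hlim := tendsto_measure_iInter_atTop (μ := μ i) (s := fun k => (⇑T)^[m] ⁻¹' G k)
      (fun k => ((hGm k).preimage (T.continuous.iterate m).measurable).nullMeasurableSet)
      (fun a b hab => preimage_mono (hGanti hab)) ⟨0, measure_ne_top _ _⟩
    rw [← preimage_iInter, hGempty, preimage_empty, measure_empty] at hlim
    exact hlim.eventually (gt_mem_nhds hδ)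
  obtain ⟨k, hk⟩ := hsmall.exists
  exact ⟨k, F k, hFc k, fun i m hm => hk i m (Finset.mem_range.2 hm)⟩

theorem exists_castle_defect_subset {Ω : Type*} [TopologicalSpace Ω] [CompactSpace Ω] [T2Space Ω]
    [TotallyDisconnectedSpace Ω] [SecondCountableTopology Ω] [MeasurableSpace Ω] [BorelSpace Ω]
    (T : Ω ≃ₜ Ω) {n : ℕ} (hn : 0 < n) {ι : Type*} [Finite ι] (μ : ι → Measure Ω)
    [∀ i, IsFiniteMeasure (μ i)] {δ : ℝ≥0∞} (hδ : 0 < δ) :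
    ∃ bs S G, IsCastleOn T bs univ ∧ IsClopen S ∧ IsOrbitSeparated T n S ∧
      (∀ i, ∀ m < n, μ i ((⇑T)^[m] ⁻¹' G) < δ) ∧ castleDefect T bs ⊆ S ∪ T ⁻¹' S ∪ G := by
  have hL : 0 < n.factorial := Nat.factorial_pos n
  obtain ⟨k, f, hf, hsmall⟩ := exists_code_periodicBad_lt T hL n μ hδ
  set V := periodicRegion T n.factorial f
  have hV : IsClopen V := isClopen_periodicRegion hf hL
  have hperV : {x | IsPeriodicPt T n.factorial x} ⊆ V := setOf_isPeriodicPt_subset_periodicRegion hL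
  have hper : ∀ x ∈ Vᶜ, ∀ j, 0 < j → j < n → (⇑T)^[j] x ≠ x := fun x hx j hj hjn hjx =>
    hx (hperV (IsPeriodicPt.trans_dvd hjx (Nat.dvd_factorial hj hjn.le)))
  obtain ⟨S, hS, hSsep, hcov⟩ := exists_marker hn hV.compl.isClosed hper
  have hentry : ∀ x ∉ Vᶜ, T.symm x ∈ Vᶜ → x ∈ periodicBad T n.factorial f := by
    refine fun x hx hTx => periodicRegion_diff_subset hL ⟨not_not.1 hx, fun hxL => hTx (hperV ?_)⟩
    exact (T.isPeriodicPt_iterate_iff 1 (x := T.symm x)).1 (by simpa using hxL)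
  refine ⟨_, S, _, (isCastleOn_periodicCastle hf hL).union
    (isCastleOn_cutCastle hn hcov hV.compl hS), hS, hSsep, hsmall, ?_⟩
  rw [castleDefect_union]
  exact union_subset ((castleDefect_periodicCastle_subset hL).trans
    (subset_union_left.trans subset_union_right))
    (castleDefect_cutCastle_subset hn hcov hV.compl hS hentry)

theorem stmt_18_general {Ω : Type*} [TopologicalSpace Ω] [CompactSpace Ω]
    [TopologicalSpace.MetrizableSpace Ω] [TotallyDisconnectedSpace Ω]
    [MeasurableSpace Ω] [BorelSpace Ω]
    (T : Ω ≃ₜ Ω)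
    (ε : ℝ) (hε : 0 < ε) (k : ℕ) (μ : Fin k → Measure Ω)
    (hμ : ∀ i, IsProbabilityMeasure (μ i)) :
    ∃ P : Ω ≃ₜ Ω,
      (∃ N : ℕ, 1 ≤ N ∧ ∀ x : Ω, (P : Ω → Ω)^[N] x = x) ∧
      (∀ i : Fin k,
        μ i ({x : Ω | P x ≠ T x} ∪ {x : Ω | P.symm x ≠ T.symm x}) < ENNReal.ofReal ε) := by
  have hε2 : 0 < ENNReal.ofReal (ε / 2) := ENNReal.ofReal_pos.2 (half_pos hε)
  obtain ⟨n, hn⟩ := ENNReal.exists_nat_mul_gt hε2.ne' (ENNReal.natCast_ne_top (2 * k))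
  have hn0 : 0 < n := Nat.pos_of_ne_zero fun h => by simp [h] at hn
  obtain ⟨bs, S, G, hbs, hS, hSsep, hGsmall, hdefect⟩ :=
    exists_castle_defect_subset T hn0 μ hε2
  obtain ⟨m, hm, hmS⟩ := hSsep.exists_iterate_measure_preimage_lt hS.isClosed.measurableSet μ
    (by simpa using hn)
  obtain ⟨P, hP, hPT⟩ := (hbs.pullback m).exists_finite_order
  refine ⟨P, hP, fun i => ?_⟩
  calc μ i ({x | P x ≠ T x} ∪ {x | P.symm x ≠ T.symm x})
      ≤ μ i ((⇑T)^[m] ⁻¹' (S ∪ T ⁻¹' S) ∪ (⇑T)^[m] ⁻¹' G) := by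
        refine measure_mono (hPT.trans ?_)
        rw [castleDefect_pullback, ← preimage_union]
        exact preimage_mono hdefect
    _ ≤ μ i ((⇑T)^[m] ⁻¹' (S ∪ T ⁻¹' S)) + μ i ((⇑T)^[m] ⁻¹' G) := measure_union_le _ _
    _ < ENNReal.ofReal (ε / 2) + ENNReal.ofReal (ε / 2) :=
        ENNReal.add_lt_add (hmS i) (hGsmall i m hm)
    _ = ENNReal.ofReal ε := by
        rw [← ENNReal.ofReal_add (half_pos hε).le (half_pos hε).le, add_halves]

/-- **Finite-order homeomorphisms are uniformly dense in `Homeo(Ω)`.** Let `T` be any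
homeomorphism of a Cantor set `Ω`. For every `ε > 0` and Borel probability measures
`μ₁, …, μ_k` there is a finite-order homeomorphism `P` with `μᵢ(E(P, T)) < ε` for all
`i`, where `E(P, T) = {x : Px ≠ Tx} ∪ {x : P⁻¹x ≠ T⁻¹x}`. -/
theorem stmt_18 {Ω : Type*} [TopologicalSpace Ω] [CompactSpace Ω]
    [TopologicalSpace.MetrizableSpace Ω] [TotallyDisconnectedSpace Ω] [PerfectSpace Ω]
    [Nonempty Ω] [MeasurableSpace Ω] [BorelSpace Ω]
    (T : Ω ≃ₜ Ω)
    (ε : ℝ) (hε : 0 < ε) (k : ℕ) (μ : Fin k → Measure Ω)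
    (hμ : ∀ i, IsProbabilityMeasure (μ i)) :
    ∃ P : Ω ≃ₜ Ω,
      (∃ N : ℕ, 1 ≤ N ∧ ∀ x : Ω, (P : Ω → Ω)^[N] x = x) ∧
      (∀ i : Fin k,
        μ i ({x : Ω | P x ≠ T x} ∪ {x : Ω | P.symm x ≠ T.symm x}) < ENNReal.ofReal ε) :=
  stmt_18_general T ε hε k μ hμ
end
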